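/- arXiv:1508.01617 — 11 statements merged into one kernel-verified Lean document; each statement's English description precedes it below -/
import Mathlib

section
/- Fix reals σ² > 0, G > 0, K > 0, η > 0, p > 0, p_b > 0, W > 0. Define, for reals τ, τ' ≥ 0 with 0 < max(τ, τ') < 1, R(τ, τ') := (1 − max(τ, τ')) · W · log₂(1 + Gη(τ·p·G + τ'·p_b·K) / ((1 − max(τ, τ'))·σ²)). Then for all 0 ≤ τ < τ' < 1 one has R(τ, τ') < R(τ', τ'); consequently any maximizer (τ*, τ'*) of R over the feasible set {(τ, τ') : τ, τ' ≥ 0, 0 < max(τ, τ') < 1} satisfies τ* ≥ τ'*. -/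
open Real

lemma mul_logb_one_add_div_lt_mul_logb_one_add_div {c d x y : ℝ} (hc : 0 < c) (hd : 0 < d)
    (hx : 0 ≤ x) (hxy : x < y) :
    c * logb 2 (1 + x / d) < c * logb 2 (1 + y / d) := by
  have hpos : 0 < 1 + x / d := by positivity
  have harg : 1 + x / d < 1 + y / d := by gcongr
  exact mul_lt_mul_of_pos_left (logb_lt_logb one_lt_two hpos harg) hc

lemma le_of_isMax_of_lt_diag {R : ℝ → ℝ → ℝ}
    (hdiag : ∀ τ τ' : ℝ, 0 ≤ τ → τ < τ' → τ' < 1 → R τ τ' < R τ' τ')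
    {τs τ's : ℝ} (hτs : 0 ≤ τs) (hτ's : 0 ≤ τ's) (hmax : max τs τ's < 1)
    (hopt : ∀ τ τ' : ℝ, 0 ≤ τ → 0 ≤ τ' → 0 < max τ τ' → max τ τ' < 1 → R τ τ' ≤ R τs τ's) :
    τ's ≤ τs := by
  by_contra! hlt
  have h1 : τ's < 1 := (le_max_right τs τ's).trans_lt hmax
  have hτ's_pos : 0 < max τ's τ's := by rw [max_self]; linarith
  have hdiag_le := hopt τ's τ's hτ's hτ's hτ's_pos (by rwa [max_self])
  exact (hdiag τs τ's hτs hlt h1).not_ge hdiag_le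

/-- For the throughput function R(τ,τ'), whenever 0 ≤ τ < τ' < 1 we have
R(τ,τ') < R(τ',τ'); consequently any maximizer (τ*,τ'*) over the feasible set
satisfies τ* ≥ τ'*. -/
theorem stmt_0 (σ2 G K η p pb W : ℝ)
    (hσ2 : 0 < σ2) (hG : 0 < G) (hK : 0 < K) (hη : 0 < η)
    (hp : 0 < p) (hpb : 0 < pb) (hW : 0 < W)
    (R : ℝ → ℝ → ℝ)
    (hR : ∀ τ τ' : ℝ, R τ τ' =
      (1 - max τ τ') * W *
        Real.logb 2 (1 + G * η * (τ * p * G + τ' * pb * K) / ((1 - max τ τ') * σ2))) :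
    (∀ τ τ' : ℝ, 0 ≤ τ → τ < τ' → τ' < 1 → R τ τ' < R τ' τ') ∧
    (∀ τs τ's : ℝ, 0 ≤ τs → 0 ≤ τ's → 0 < max τs τ's → max τs τ's < 1 →
      (∀ τ τ' : ℝ, 0 ≤ τ → 0 ≤ τ' → 0 < max τ τ' → max τ τ' < 1 → R τ τ' ≤ R τs τ's) →
      τ's ≤ τs) := by
  have hdiag : ∀ τ τ' : ℝ, 0 ≤ τ → τ < τ' → τ' < 1 → R τ τ' < R τ' τ' := by
    intro τ τ' hτ hlt h1
    rw [hR, hR, max_eq_right hlt.le, max_self]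
    have h1' : 0 < 1 - τ' := by linarith
    have hτ' : 0 ≤ τ' := hτ.trans hlt.le
    -- the time share and denominator depend only on `τ'`; only the harvested energy grows
    have henergy : G * η * (τ * p * G + τ' * pb * K) < G * η * (τ' * p * G + τ' * pb * K) := by
      gcongr
    exact mul_logb_one_add_div_lt_mul_logb_one_add_div (mul_pos h1' hW) (mul_pos h1' hσ2)
      (by positivity) henergy
  exact ⟨hdiag, fun τs τ's hτs hτ's _ hmax hopt => le_of_isMax_of_lt_diag hdiag hτs hτ's hmax hopt⟩
end

section
/- Fix σ², G, K, η, p, p_b, W, λ > 0. Let z† be the unique z > 1 with z·ln z − z + 1 = G²ηp/σ², and E^lim := p_b(z†−1)σ²/((z†−1)σ² + Gη(pG + p_b·K)). Given E with 0 ≤ E < p_b, define S(τ) := λW(1 − τ)·log₂(1 + Gη(τ·p·G + E·K)/((1 − τ)σ²)) for τ ∈ (0, 1). Then the problem of maximizing S(τ) subject to 0 < τ < 1 and τ ≥ E/p_b has the unique maximizer τ(E) = ((z†−1)σ² − GηEK)/((z†−1)σ² + G²ηp) if 0 ≤ E ≤ E^lim, and τ(E) = E/p_b if E^lim < E < p_b.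 -/
private lemma psi_pos {z : ℝ} (hz : 1 < z) : 0 < z * Real.log z - z + 1 := by
  have hz0 : (0:ℝ) < z := by linarith
  have h0 : (0:ℝ) < 1/z := by positivity
  have hne : (1:ℝ)/z ≠ 1 := by
    intro h
    rw [div_eq_one_iff_eq (ne_of_gt hz0)] at h
    linarith
  have h := Real.log_lt_sub_one_of_pos h0 hne
  rw [Real.log_div one_ne_zero (ne_of_gt hz0), Real.log_one] at h
  have h2 : z * (0 - Real.log z) < z * (1/z - 1) := mul_lt_mul_of_pos_left h hz0
  have h3 : z * (1/z - 1) = 1 - z := by field_simp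
  nlinarith [h2, h3]

private lemma g_max {a zdag z : ℝ} (hzd : 1 < zdag) (hzgt : 1 < z) (hne : z ≠ zdag)
    (haz : zdag * Real.log zdag - zdag + 1 = a) :
    Real.log z / (z - 1 + a) < Real.log zdag / (zdag - 1 + a) := by
  set L := Real.log zdag with hL
  have hLpos : 0 < L := Real.log_pos hzd
  have hz0 : (0:ℝ) < z := by linarith
  have hzd0 : (0:ℝ) < zdag := by linarith
  have hapos : 0 < a := haz ▸ psi_pos hzd
  have hzpos : 0 < z - 1 + a := by linarith
  have hDpos : 0 < zdag - 1 + a := by linarith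
  have hratio : z / zdag ≠ 1 := by
    intro h
    rw [div_eq_one_iff_eq (ne_of_gt hzd0)] at h
    exact hne h
  have hk := Real.log_lt_sub_one_of_pos (by positivity : (0:ℝ) < z/zdag) hratio
  rw [Real.log_div (ne_of_gt hz0) (ne_of_gt hzd0)] at hk
  have hk2 : zdag * (Real.log z - L) < z - zdag := by
    have h2 := mul_lt_mul_of_pos_left hk hzd0
    have he : zdag * (z/zdag - 1) = z - zdag := by field_simp
    linarith [h2, he]
  rw [div_lt_div_iff₀ hzpos hDpos]
  nlinarith [mul_lt_mul_of_pos_left hk2 hLpos]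

private lemma g_anti {a zdag z1 z2 : ℝ} (hzd : 1 < zdag) (h1 : zdag ≤ z1) (h12 : z1 < z2)
    (haz : zdag * Real.log zdag - zdag + 1 = a) :
    Real.log z2 / (z2 - 1 + a) < Real.log z1 / (z1 - 1 + a) := by
  set L := Real.log zdag with hL
  set L1 := Real.log z1 with hL1
  set L2 := Real.log z2 with hL2
  have hz1' : 1 < z1 := lt_of_lt_of_le hzd h1
  have hz2' : 1 < z2 := by linarith
  have hLpos : 0 < L := Real.log_pos hzd
  have hL1pos : 0 < L1 := Real.log_pos hz1'
  have hL12 : L1 < L2 := Real.log_lt_log (by linarith) h12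
  have hz1pos : 0 < z1 - 1 + a := by nlinarith [mul_nonneg (sub_nonneg.mpr h1) hLpos.le]
  have hz2pos : 0 < z2 - 1 + a := by linarith
  -- Step A : z1 - 1 + a ≤ z1 * L1
  have hA : z1 - 1 + a ≤ z1 * L1 := by
    have h := Real.log_le_sub_one_of_pos (show (0:ℝ) < zdag/z1 by positivity)
    rw [Real.log_div (by positivity) (by positivity)] at h
    -- h : L - L1 ≤ zdag/z1 - 1
    have h2 : z1 * (L - L1) ≤ z1 * (zdag/z1 - 1) := mul_le_mul_of_nonneg_left h (by positivity)
    have he : z1 * (zdag/z1 - 1) = zdag - z1 := by field_simp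
    nlinarith [mul_nonneg (sub_nonneg.mpr h1) hLpos.le]
  -- Step B : z1 * (L2 - L1) < z2 - z1
  have hB : z1 * (L2 - L1) < z2 - z1 := by
    have hne : z2 / z1 ≠ 1 := by
      intro h
      rw [div_eq_one_iff_eq (by positivity)] at h
      linarith
    have h := Real.log_lt_sub_one_of_pos (show (0:ℝ) < z2/z1 by positivity) hne
    rw [Real.log_div (by positivity) (by positivity)] at h
    have h2 := mul_lt_mul_of_pos_left h (show (0:ℝ) < z1 by positivity)
    have he : z1 * (z2/z1 - 1) = z2 - z1 := by field_simp
    linarith [h2, he]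
  rw [div_lt_div_iff₀ hz2pos hz1pos]
  nlinarith [mul_nonneg (sub_nonneg.mpr hL12.le) (sub_nonneg.mpr hA),
    mul_pos hL1pos (show (0:ℝ) < z2 - z1 - z1 * (L2 - L1) by linarith)]

private lemma S_compare {a b zdag τ1 τ2 : ℝ} (ha : 0 < a) (hb : 0 ≤ b) (hzd : 1 < zdag)
    (haz : zdag * Real.log zdag - zdag + 1 = a)
    (h01 : 0 < τ1) (h11 : τ1 < 1) (h02 : 0 < τ2) (h12 : τ2 < 1)
    (hcase : (τ2 = (zdag - 1 - b) / (zdag - 1 + a) ∧ τ1 ≠ τ2) ∨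
      ((zdag - 1 - b) / (zdag - 1 + a) ≤ τ2 ∧ τ2 < τ1)) :
    (1 - τ1) * Real.log (1 + (a * τ1 + b) / (1 - τ1)) <
      (1 - τ2) * Real.log (1 + (a * τ2 + b) / (1 - τ2)) := by
  have hDpos : 0 < zdag - 1 + a := by linarith
  set z1 := 1 + (a * τ1 + b) / (1 - τ1) with hz1def
  set z2 := 1 + (a * τ2 + b) / (1 - τ2) with hz2def
  have h1τ : (0:ℝ) < 1 - τ1 := by linarith
  have h2τ : (0:ℝ) < 1 - τ2 := by linarith
  have habpos : 0 < a + b := by linarith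
  have hz1gt : 1 < z1 := by
    rw [hz1def]
    have : 0 < (a * τ1 + b) / (1 - τ1) := div_pos (by nlinarith) h1τ
    linarith
  have hz2gt : 1 < z2 := by
    rw [hz2def]
    have : 0 < (a * τ2 + b) / (1 - τ2) := div_pos (by nlinarith) h2τ
    linarith
  have hbr1 : (1 - τ1) * (z1 - 1 + a) = a + b := by
    rw [hz1def]; field_simp; ring
  have hbr2 : (1 - τ2) * (z2 - 1 + a) = a + b := by
    rw [hz2def]; field_simp; ring
  have hsign1 : z1 - zdag = (τ1 * (zdag - 1 + a) - (zdag - 1 - b)) / (1 - τ1) := by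
    rw [hz1def]; field_simp; ring
  have hsign2 : z2 - zdag = (τ2 * (zdag - 1 + a) - (zdag - 1 - b)) / (1 - τ2) := by
    rw [hz2def]; field_simp; ring
  have hzi1pos : 0 < z1 - 1 + a := by linarith
  have hzi2pos : 0 < z2 - 1 + a := by linarith
  have key : Real.log z1 / (z1 - 1 + a) < Real.log z2 / (z2 - 1 + a) := by
    rcases hcase with ⟨heq, hne⟩ | ⟨hle, hlt⟩
    · have ht : τ2 * (zdag - 1 + a) = zdag - 1 - b := by
        rw [heq]; field_simp
      have hz2eq : z2 = zdag := by
        have h0 : z2 - zdag = 0 := by rw [hsign2, ht]; simp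
        linarith
      have hz1ne : z1 ≠ zdag := by
        intro h
        apply hne
        have h0 : z1 - zdag = 0 := by rw [h]; ring
        rw [hsign1] at h0
        rw [div_eq_zero_iff] at h0
        rcases h0 with h0 | h0
        · rw [heq, eq_div_iff (ne_of_gt hDpos)]; linarith
        · linarith
      rw [hz2eq]
      exact g_max hzd hz1gt hz1ne haz
    · have hz2ge : zdag ≤ z2 := by
        have ht : zdag - 1 - b ≤ τ2 * (zdag - 1 + a) := by
          rw [div_le_iff₀ hDpos] at hle; linarith
        have h0 : 0 ≤ z2 - zdag := by
          rw [hsign2]; exact div_nonneg (by linarith) h2τ.le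
        linarith
      have hz12 : z2 < z1 := by
        have hd : z1 - z2 = (a + b) * (τ1 - τ2) / ((1 - τ1) * (1 - τ2)) := by
          rw [hz1def, hz2def]; field_simp; ring
        have hpos : 0 < (a + b) * (τ1 - τ2) / ((1 - τ1) * (1 - τ2)) :=
          div_pos (mul_pos habpos (by linarith)) (mul_pos h1τ h2τ)
        have h0 : 0 < z1 - z2 := by rw [hd]; exact hpos
        exact sub_pos.mp h0
      exact g_anti hzd hz2ge hz12 haz
  have e1 : (1 - τ1) * Real.log z1 = (a + b) * (Real.log z1 / (z1 - 1 + a)) := by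
    rw [← hbr1]; field_simp
  have e2 : (1 - τ2) * Real.log z2 = (a + b) * (Real.log z2 / (z2 - 1 + a)) := by
    rw [← hbr2]; field_simp
  rw [e1, e2]
  exact mul_lt_mul_of_pos_left key habpos


set_option maxHeartbeats 1000000 in
/-- For 0 ≤ E < p_b, the problem max S(τ) s.t. 0 < τ < 1, τ ≥ E/p_b has the
unique maximizer τ(E) given by the closed form of Proposition 1. -/
theorem stmt_3 (σ2 G K η p pb W lam : ℝ)
    (hσ2 : 0 < σ2) (hG : 0 < G) (hK : 0 < K) (hη : 0 < η)
    (hp : 0 < p) (hpb : 0 < pb) (hW : 0 < W) (hlam : 0 < lam)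
    (zdag : ℝ) (hz1 : 1 < zdag)
    (hz : zdag * Real.log zdag - zdag + 1 = G ^ 2 * η * p / σ2)
    (Elim : ℝ)
    (hElim : Elim = pb * (zdag - 1) * σ2 / ((zdag - 1) * σ2 + G * η * (p * G + pb * K)))
    (E : ℝ) (hE0 : 0 ≤ E) (hEpb : E < pb)
    (S : ℝ → ℝ)
    (hS : ∀ τ : ℝ, S τ = lam * W * (1 - τ) *
      Real.logb 2 (1 + G * η * (τ * p * G + E * K) / ((1 - τ) * σ2)))
    (τE : ℝ)
    (hτE : τE = if E ≤ Elim then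
        ((zdag - 1) * σ2 - G * η * E * K) / ((zdag - 1) * σ2 + G ^ 2 * η * p)
      else E / pb) :
    (0 < τE ∧ τE < 1 ∧ E / pb ≤ τE) ∧
    (∀ τ : ℝ, 0 < τ → τ < 1 → E / pb ≤ τ → S τ ≤ S τE) ∧
    (∀ τ : ℝ, 0 < τ → τ < 1 → E / pb ≤ τ → S τ = S τE → τ = τE) := by
  have hlog2 : 0 < Real.log 2 := Real.log_pos one_lt_two
  set a := G ^ 2 * η * p / σ2 with hadef
  set b := G * η * E * K / σ2 with hbdef
  have ha : 0 < a := div_pos (mul_pos (mul_pos (pow_pos hG 2) hη) hp) hσ2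
  have hb : 0 ≤ b :=
    div_nonneg (mul_nonneg (mul_nonneg (mul_nonneg hG.le hη.le) hE0) hK.le) hσ2.le
  have haσ : a * σ2 = G ^ 2 * η * p := by rw [hadef]; field_simp
  have hbσ : b * σ2 = G * η * E * K := by rw [hbdef]; field_simp
  have haz : zdag * Real.log zdag - zdag + 1 = a := hz
  have hDpos : 0 < zdag - 1 + a := by linarith
  have hzσ : 0 < (zdag - 1) * σ2 := mul_pos (by linarith) hσ2
  have hDσ : 0 < (zdag - 1) * σ2 + G * η * (p * G + pb * K) :=
    add_pos hzσ (mul_pos (mul_pos hG hη) (add_pos (mul_pos hp hG) (mul_pos hpb hK)))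
  have hden2 : 0 < (zdag - 1) * σ2 + G ^ 2 * η * p :=
    add_pos hzσ (mul_pos (mul_pos (pow_pos hG 2) hη) hp)
  have hts : ((zdag - 1) * σ2 - G * η * E * K) / ((zdag - 1) * σ2 + G ^ 2 * η * p)
      = (zdag - 1 - b) / (zdag - 1 + a) := by
    rw [div_eq_div_iff hden2.ne' hDpos.ne']
    linear_combination (zdag-1)*haσ + (zdag-1)*hbσ - b*haσ + a*hbσ
  have hSF : ∀ τ : ℝ, 0 < τ → τ < 1 → S τ = (lam * W / Real.log 2) *
      ((1 - τ) * Real.log (1 + (a * τ + b) / (1 - τ))) := by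
    intro τ h0 h1
    rw [hS τ]
    have h1τ : (1:ℝ) - τ ≠ 0 := by intro h; linarith [h]
    have harg : G * η * (τ * p * G + E * K) / ((1 - τ) * σ2) = (a * τ + b) / (1 - τ) := by
      rw [hadef, hbdef]
      field_simp
    rw [harg, Real.logb]
    ring
  have hCpos : 0 < lam * W / Real.log 2 := div_pos (mul_pos hlam hW) hlog2
  by_cases hc : E ≤ Elim
  · -- Case 1 : interior optimum
    have hτEeq : τE = (zdag - 1 - b) / (zdag - 1 + a) := by
      rw [hτE, if_pos hc, hts]
    have hcE : E * ((zdag - 1) * σ2 + G * η * (p * G + pb * K)) ≤ pb * (zdag - 1) * σ2 := by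
      rw [hElim, le_div_iff₀ hDσ] at hc
      linarith
    have hGE : G * η * E * K < (zdag - 1) * σ2 := by
      rcases eq_or_lt_of_le hE0 with h | h
      · rw [← h]; simpa using hzσ
      · nlinarith [mul_pos (mul_pos (mul_pos hG hη) h) hK, mul_pos h hden2]
    have hblt : b < zdag - 1 := by
      rw [hbdef, div_lt_iff₀ hσ2]
      linarith
    have hτE0 : 0 < τE := by
      rw [hτEeq]; exact div_pos (by linarith) hDpos
    have hτE1 : τE < 1 := by
      rw [hτEeq, div_lt_one hDpos]; linarith
    have hfeas : E / pb ≤ τE := by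
      rw [hτEeq, div_le_div_iff₀ hpb hDpos]
      have e2 : E * (a * σ2) = E * (G ^ 2 * η * p) := by rw [haσ]
      have e3 : pb * (b * σ2) = pb * (G * η * E * K) := by rw [hbσ]
      have h2 : E * (zdag - 1 + a) * σ2 ≤ pb * (zdag - 1 - b) * σ2 := by
        nlinarith [hcE, e2, e3]
      exact le_of_mul_le_mul_right (by linarith [h2]) hσ2
    have hstrict : ∀ τ : ℝ, 0 < τ → τ < 1 → τ ≠ τE → S τ < S τE := by
      intro τ h0 h1 hne
      have hcomp := S_compare ha hb hz1 haz h0 h1 hτE0 hτE1 (Or.inl ⟨hτEeq, hne⟩)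
      rw [hSF τ h0 h1, hSF τE hτE0 hτE1]
      exact mul_lt_mul_of_pos_left hcomp hCpos
    refine ⟨⟨hτE0, hτE1, hfeas⟩, ?_, ?_⟩
    · intro τ h0 h1 _
      rcases eq_or_ne τ τE with rfl | hne
      · exact le_rfl
      · exact (hstrict τ h0 h1 hne).le
    · intro τ h0 h1 _ hSeq
      by_contra hne
      exact absurd hSeq (ne_of_lt (hstrict τ h0 h1 hne))
  · -- Case 2 : boundary optimum
    push_neg at hc
    have hElim0 : 0 < Elim := by
      rw [hElim]
      exact div_pos (mul_pos (mul_pos hpb (by linarith)) hσ2) hDσ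
    have hE0' : 0 < E := hElim0.trans hc
    have hτEeq : τE = E / pb := by rw [hτE, if_neg (not_le.mpr hc)]
    have hτE0 : 0 < τE := by rw [hτEeq]; exact div_pos hE0' hpb
    have hτE1 : τE < 1 := by rw [hτEeq, div_lt_one hpb]; exact hEpb
    have hfeas : E / pb ≤ τE := le_of_eq hτEeq.symm
    have hcE : pb * (zdag - 1) * σ2 < E * ((zdag - 1) * σ2 + G * η * (p * G + pb * K)) := by
      rw [hElim, div_lt_iff₀ hDσ] at hc
      linarith
    have hstar : (zdag - 1 - b) / (zdag - 1 + a) ≤ τE := by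
      rw [hτEeq, div_le_div_iff₀ hDpos hpb]
      have e2 : E * (a * σ2) = E * (G ^ 2 * η * p) := by rw [haσ]
      have e3 : pb * (b * σ2) = pb * (G * η * E * K) := by rw [hbσ]
      have h2 : (zdag - 1 - b) * pb * σ2 ≤ E * (zdag - 1 + a) * σ2 := by
        nlinarith [hcE, e2, e3]
      exact le_of_mul_le_mul_right (by linarith [h2]) hσ2
    have hstrict : ∀ τ : ℝ, 0 < τ → τ < 1 → E / pb ≤ τ → τ ≠ τE → S τ < S τE := by
      intro τ h0 h1 hτf hne
      have hτgt : τE < τ := by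
        rcases lt_or_eq_of_le (hτEeq ▸ hτf : τE ≤ τ) with h | h
        · exact h
        · exact absurd h.symm hne
      have hcomp := S_compare ha hb hz1 haz h0 h1 hτE0 hτE1 (Or.inr ⟨hstar, hτgt⟩)
      rw [hSF τ h0 h1, hSF τE hτE0 hτE1]
      exact mul_lt_mul_of_pos_left hcomp hCpos
    refine ⟨⟨hτE0, hτE1, hfeas⟩, ?_, ?_⟩
    · intro τ h0 h1 hτf
      rcases eq_or_ne τ τE with rfl | hne
      · exact le_rfl
      · exact (hstrict τ h0 h1 hτf hne).le
    · intro τ h0 h1 hτf hSeq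
      by_contra hne
      exact absurd hSeq (ne_of_lt (hstrict τ h0 h1 hτf hne))
end

section
/- Fix σ², G, K, η, p, p_b, W, λ > 0. Let z† be the unique z > 1 with z·ln z − z + 1 = G²ηp/σ², and E^lim := p_b(z†−1)σ²/((z†−1)σ² + Gη(pG + p_b·K)). Then for every E with 0 ≤ E ≤ E^lim, setting τ(E) := ((z†−1)σ² − GηEK)/((z†−1)σ² + G²ηp), one has λW(1 − τ(E))·log₂(1 + Gη(τ(E)·p·G + E·K)/((1 − τ(E))σ²)) = λW·Gη(pG + EK)/(z†·σ²·ln 2). -/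
/-!
Write `D = (z† - 1)σ² + G²ηp` for the denominator of `τ(E)`. Then `(1 - τ)D = Gη(pG + EK)` and
`Gη(τpG + EK) = (1 - τ)(z† - 1)σ²`, so the argument of the logarithm collapses to `z†`.
The defining equation of `z†` says `σ² z† ln z† = D`, and multiplying out `(1 - τ) ln z†` gives
the closed form.
-/

open Real

lemma mul_logb_one_add_mul_sub_one_div (b x z s : ℝ) (hs : s ≠ 0) :
    x * logb b (1 + x * (z - 1) * s / (x * s)) = x * logb b z := by
  rcases eq_or_ne x 0 with rfl | hx
  · simp
  · congr 2
    field_simp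
    ring

section TransferTime

variable {σ2 G K η p E z τ : ℝ}

lemma one_sub_mul_denom_of_tau_eq (hD : (z - 1) * σ2 + G ^ 2 * η * p ≠ 0)
    (hτ : τ = ((z - 1) * σ2 - G * η * E * K) / ((z - 1) * σ2 + G ^ 2 * η * p)) :
    (1 - τ) * ((z - 1) * σ2 + G ^ 2 * η * p) = G * η * (p * G + E * K) := by
  rw [hτ]
  field_simp
  ring

lemma snr_numerator_eq_of_tau_eq (hD : (z - 1) * σ2 + G ^ 2 * η * p ≠ 0)
    (hτ : τ = ((z - 1) * σ2 - G * η * E * K) / ((z - 1) * σ2 + G ^ 2 * η * p)) :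
    G * η * (τ * p * G + E * K) = (1 - τ) * (z - 1) * σ2 := by
  rw [hτ]
  field_simp
  ring

end TransferTime

theorem stmt_6_general (σ2 G K η p W lam : ℝ)
    (hσ2 : 0 < σ2)
    (zdag : ℝ) (hz1 : 1 < zdag)
    (hz : zdag * Real.log zdag - zdag + 1 = G ^ 2 * η * p / σ2)
    (Elim : ℝ) :
    ∀ E : ℝ, 0 ≤ E → E ≤ Elim →
      ∀ τE : ℝ, τE = ((zdag - 1) * σ2 - G * η * E * K) / ((zdag - 1) * σ2 + G ^ 2 * η * p) →
        lam * W * (1 - τE) *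
            Real.logb 2 (1 + G * η * (τE * p * G + E * K) / ((1 - τE) * σ2)) =
          lam * W * G * η * (p * G + E * K) / (zdag * σ2 * Real.log 2) := by
  intro E _ _ τE hτ
  have hD : σ2 * (zdag * log zdag) = (zdag - 1) * σ2 + G ^ 2 * η * p := by
    field_simp at hz
    linear_combination hz
  have hD_pos : 0 < (zdag - 1) * σ2 + G ^ 2 * η * p := by
    have := log_pos hz1
    rw [← hD]
    positivity
  have hlog2 : log 2 ≠ 0 := (log_pos one_lt_two).ne'
  have h1τ := one_sub_mul_denom_of_tau_eq hD_pos.ne' hτ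
  rw [← hD] at h1τ
  have hrate : (1 - τE) * (log zdag / log 2) =
      G * η * (p * G + E * K) / (zdag * σ2 * log 2) := by
    field_simp
    linear_combination h1τ
  rw [snr_numerator_eq_of_tau_eq hD_pos.ne' hτ, mul_assoc,
    mul_logb_one_add_mul_sub_one_div _ _ _ _ hσ2.ne', logb, hrate]
  ring

/-- For 0 ≤ E ≤ E^lim, plugging τ(E) = ((z†−1)σ² − GηEK)/((z†−1)σ² + G²ηp)
into the weighted throughput gives λW·Gη(pG + EK)/(z†σ² ln 2). -/
theorem stmt_6 (σ2 G K η p pb W lam : ℝ)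
    (hσ2 : 0 < σ2) (hG : 0 < G) (hK : 0 < K) (hη : 0 < η)
    (hp : 0 < p) (hpb : 0 < pb) (hW : 0 < W) (hlam : 0 < lam)
    (zdag : ℝ) (hz1 : 1 < zdag)
    (hz : zdag * Real.log zdag - zdag + 1 = G ^ 2 * η * p / σ2)
    (Elim : ℝ)
    (hElim : Elim = pb * (zdag - 1) * σ2 / ((zdag - 1) * σ2 + G * η * (p * G + pb * K))) :
    ∀ E : ℝ, 0 ≤ E → E ≤ Elim →
      ∀ τE : ℝ, τE = ((zdag - 1) * σ2 - G * η * E * K) / ((zdag - 1) * σ2 + G ^ 2 * η * p) →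
        lam * W * (1 - τE) *
            Real.logb 2 (1 + G * η * (τE * p * G + E * K) / ((1 - τE) * σ2)) =
          lam * W * G * η * (p * G + E * K) / (zdag * σ2 * Real.log 2) :=
  stmt_6_general σ2 G K η p W lam hσ2 zdag hz1 hz Elim
end

section
/- Let X > 0 and p_b > 0. The function g(E) := (1 − E/p_b)·log₂(1 + X·E/(p_b − E)) on [0, p_b) is differentiable on (0, p_b) with derivative β(E) = −(1/p_b)·log₂(1 + X·E/(p_b − E)) + X/((p_b − E + X·E)·ln 2), and twice differentiable with g''(E) = −X²·p_b/((p_b − E + X·E)²·(p_b − E)·ln 2) < 0 for all E ∈ (0, p_b). In particular β is strictly decreasing on (0, p_b) and g is strictly concave on [0, p_b). -/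
/-- g(E) = (1 − E/p_b)·log₂(1 + XE/(p_b − E)) on [0, p_b) is differentiable
on (0, p_b) with derivative β(E), twice differentiable with negative second derivative;
β is strictly decreasing on (0, p_b) and g is strictly concave on [0, p_b). -/
theorem stmt_7 (X pb : ℝ) (hX : 0 < X) (hpb : 0 < pb)
    (g β : ℝ → ℝ)
    (hg : ∀ E : ℝ, g E = (1 - E / pb) * Real.logb 2 (1 + X * E / (pb - E)))
    (hβ : ∀ E : ℝ, β E = -(1 / pb) * Real.logb 2 (1 + X * E / (pb - E))
        + X / ((pb - E + X * E) * Real.log 2)) :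
    (∀ E ∈ Set.Ioo (0 : ℝ) pb, HasDerivAt g (β E) E) ∧
    (∀ E ∈ Set.Ioo (0 : ℝ) pb,
      HasDerivAt β (-(X ^ 2 * pb / ((pb - E + X * E) ^ 2 * (pb - E) * Real.log 2))) E) ∧
    (∀ E ∈ Set.Ioo (0 : ℝ) pb,
      -(X ^ 2 * pb / ((pb - E + X * E) ^ 2 * (pb - E) * Real.log 2)) < 0) ∧
    StrictAntiOn β (Set.Ioo (0 : ℝ) pb) ∧
    StrictConcaveOn ℝ (Set.Ico (0 : ℝ) pb) g := by
  have hgfun : g = fun E => (1 - E / pb) * Real.logb 2 (1 + X * E / (pb - E)) := funext hg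
  have hβfun : β = fun E => -(1 / pb) * Real.logb 2 (1 + X * E / (pb - E))
      + X / ((pb - E + X * E) * Real.log 2) := funext hβ
  have hl2pos : (0:ℝ) < Real.log 2 := Real.log_pos (by norm_num)
  have hlog2 : Real.log 2 ≠ 0 := ne_of_gt hl2pos
  -- key derivative fact for g, valid on [0, pb)
  have key1 : ∀ E : ℝ, 0 ≤ E → E < pb → HasDerivAt g (β E) E := by
    intro E hE0 hEpb
    have hD : (0:ℝ) < pb - E := by linarith
    have hDne : pb - E ≠ 0 := ne_of_gt hD
    have hS : (0:ℝ) < pb - E + X * E := by nlinarith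
    have hSne : pb - E + X * E ≠ 0 := ne_of_gt hS
    have hfx : (0:ℝ) < 1 + X * E / (pb - E) := by
      have h : 1 + X * E / (pb - E) = (pb - E + X * E) / (pb - E) := by field_simp
      rw [h]; positivity
    have hden : HasDerivAt (fun y : ℝ => pb - y) (-1) E := by
      simpa using (hasDerivAt_id' E).const_sub pb
    have hnum : HasDerivAt (fun y : ℝ => X * y) X E := by
      simpa using (hasDerivAt_id E).const_mul X
    have hf : HasDerivAt (fun y : ℝ => 1 + X * y / (pb - y))
        ((X * (pb - E) - X * E * (-1)) / (pb - E) ^ 2) E :=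
      (hnum.div hden hDne).const_add 1
    have hlog : HasDerivAt (fun y : ℝ => Real.log (1 + X * y / (pb - y)))
        ((X * (pb - E) - X * E * (-1)) / (pb - E) ^ 2 / (1 + X * E / (pb - E))) E :=
      hf.log (ne_of_gt hfx)
    have hlogb := hlog.div_const (Real.log 2)
    have hlin : HasDerivAt (fun y : ℝ => 1 - y / pb) (-(1 / pb)) E := by
      have h := ((hasDerivAt_id E).div_const pb).const_sub 1
      simpa [one_div] using h
    have hmul : HasDerivAt (fun y : ℝ => (1 - y / pb) * (Real.log (1 + X * y / (pb - y)) / Real.log 2))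
        (-(1 / pb) * (Real.log (1 + X * E / (pb - E)) / Real.log 2) +
          (1 - E / pb) * ((X * (pb - E) - X * E * -1) / (pb - E) ^ 2 / (1 + X * E / (pb - E)) / Real.log 2))
        E := hlin.fun_mul hlogb
    rw [hgfun]
    simp only [Real.logb]
    convert hmul using 1
    rw [hβ]
    simp only [Real.logb]
    field_simp
    ring
  -- key derivative fact for β, valid on (0, pb)
  have key2 : ∀ E ∈ Set.Ioo (0 : ℝ) pb,
      HasDerivAt β (-(X ^ 2 * pb / ((pb - E + X * E) ^ 2 * (pb - E) * Real.log 2))) E := by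
    rintro E ⟨hE0, hEpb⟩
    have hD : (0:ℝ) < pb - E := by linarith
    have hDne : pb - E ≠ 0 := ne_of_gt hD
    have hS : (0:ℝ) < pb - E + X * E := by nlinarith
    have hSne : pb - E + X * E ≠ 0 := ne_of_gt hS
    have hfx : (0:ℝ) < 1 + X * E / (pb - E) := by
      have h : 1 + X * E / (pb - E) = (pb - E + X * E) / (pb - E) := by field_simp
      rw [h]; positivity
    have hden : HasDerivAt (fun y : ℝ => pb - y) (-1) E := by
      simpa using (hasDerivAt_id' E).const_sub pb
    have hnum : HasDerivAt (fun y : ℝ => X * y) X E := by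
      simpa using (hasDerivAt_id E).const_mul X
    have hf : HasDerivAt (fun y : ℝ => 1 + X * y / (pb - y))
        ((X * (pb - E) - X * E * (-1)) / (pb - E) ^ 2) E :=
      (hnum.div hden hDne).const_add 1
    have hlog : HasDerivAt (fun y : ℝ => Real.log (1 + X * y / (pb - y)))
        ((X * (pb - E) - X * E * (-1)) / (pb - E) ^ 2 / (1 + X * E / (pb - E))) E :=
      hf.log (ne_of_gt hfx)
    have h1 := (hlog.div_const (Real.log 2)).const_mul (-(1 / pb))
    have hlin2 : HasDerivAt (fun y : ℝ => (pb - y + X * y) * Real.log 2)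
        ((-1 + X) * Real.log 2) E := by
      have h : HasDerivAt (fun y : ℝ => pb - y + X * y) (-1 + X) E := by
        simpa using ((hasDerivAt_id' E).const_sub pb).fun_add
          ((hasDerivAt_id' E).const_mul X)
      simpa using h.mul_const (Real.log 2)
    have hSlne : (pb - E + X * E) * Real.log 2 ≠ 0 := mul_ne_zero hSne hlog2
    have h2 := (hasDerivAt_const E X).div hlin2 hSlne
    have hsum : HasDerivAt (fun y : ℝ => -(1 / pb) * (Real.log (1 + X * y / (pb - y)) / Real.log 2)
        + X / ((pb - y + X * y) * Real.log 2))
        (-(1 / pb) * ((X * (pb - E) - X * E * (-1)) / (pb - E) ^ 2 / (1 + X * E / (pb - E)) / Real.log 2)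
          + (0 * ((pb - E + X * E) * Real.log 2) - X * ((-1 + X) * Real.log 2))
            / ((pb - E + X * E) * Real.log 2) ^ 2) E := h1.fun_add h2
    rw [hβfun]
    simp only [Real.logb]
    convert hsum using 1
    field_simp
    ring
  have keyneg : ∀ E ∈ Set.Ioo (0 : ℝ) pb,
      -(X ^ 2 * pb / ((pb - E + X * E) ^ 2 * (pb - E) * Real.log 2)) < 0 := by
    rintro E ⟨hE0, hEpb⟩
    have hD : (0:ℝ) < pb - E := by linarith
    have hS : (0:ℝ) < pb - E + X * E := by nlinarith
    have h : 0 < X ^ 2 * pb / ((pb - E + X * E) ^ 2 * (pb - E) * Real.log 2) := by positivity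
    linarith
  have hanti : StrictAntiOn β (Set.Ioo (0 : ℝ) pb) := by
    apply strictAntiOn_of_deriv_neg (convex_Ioo 0 pb)
    · exact fun x hx => ((key2 x hx).continuousAt).continuousWithinAt
    · intro x hx
      rw [interior_Ioo] at hx
      rw [(key2 x hx).deriv]
      exact keyneg x hx
  refine ⟨fun E hE => key1 E hE.1.le hE.2, key2, keyneg, hanti, ?_⟩
  apply StrictAntiOn.strictConcaveOn_of_deriv (convex_Ico 0 pb)
  · exact fun x hx => ((key1 x hx.1 hx.2).continuousAt).continuousWithinAt
  · rw [interior_Ico]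
    intro x hx y hy hxy
    rw [(key1 x hx.1.le hx.2).deriv, (key1 y hy.1.le hy.2).deriv]
    exact hanti hx hy hxy
end

section
/- Fix σ², G, K, η, p, p_b, W, λ > 0 and set A := G²ηp/σ² and X := Gη(pG + p_b·K)/σ². Let z† be the unique z > 1 with z·ln z − z + 1 = A, let E^lim := p_b(z†−1)/(z†−1+X), and define β(E) := −(λW/p_b)·log₂(1 + X·E/(p_b − E)) + λW·X/((p_b − E + X·E)·ln 2). Then β(E^lim) = λW·G·η·K/(z†·σ²·ln 2), i.e. the gradient of the piecewise function S(E) is continuous at E^lim, where its value on [0, E^lim] is the constant α := λW·G·η·K/(z†·σ²·ln 2). -/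
/-!
At `E^lim` the SNR argument `1 + X E/(p_b - E)` equals `z†`, so the logarithmic term of `β` is
`log z†`, and the defining equation of `z†` rewrites `z† log z†` as `A + z† - 1`. The two terms of
`β` then combine into `λW (X - A)/(p_b z† ln 2)`, and `X - A = G η p_b K/σ²`.
-/

namespace Elim

variable {pb X z : ℝ}

lemma sub_eq (hD : z - 1 + X ≠ 0) :
    pb - pb * (z - 1) / (z - 1 + X) = pb * X / (z - 1 + X) := by
  field_simp; ring

lemma one_add_mul_div_sub_eq (hpb : pb ≠ 0) (hX : X ≠ 0) (hD : z - 1 + X ≠ 0) :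
    1 + X * (pb * (z - 1) / (z - 1 + X)) / (pb - pb * (z - 1) / (z - 1 + X)) = z := by
  rw [sub_eq hD]; field_simp; ring

lemma sub_add_mul_eq (hD : z - 1 + X ≠ 0) :
    pb - pb * (z - 1) / (z - 1 + X) + X * (pb * (z - 1) / (z - 1 + X))
      = pb * X * z / (z - 1 + X) := by
  rw [sub_eq hD]; field_simp; ring

end Elim

lemma Real.log_eq_of_mul_log_sub_add_eq {z A : ℝ} (hz0 : z ≠ 0)
    (hz : z * Real.log z - z + 1 = A) : Real.log z = (A + z - 1) / z := by
  field_simp; linarith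

lemma gradient_at_elim {c pb X A z E : ℝ} (hpb : 0 < pb) (hX : 0 < X) (hz1 : 1 < z)
    (hz : z * Real.log z - z + 1 = A) (hE : E = pb * (z - 1) / (z - 1 + X)) :
    -(c / pb) * Real.logb 2 (1 + X * E / (pb - E)) + c * X / ((pb - E + X * E) * Real.log 2)
      = c * (X - A) / (pb * z * Real.log 2) := by
  have hD : z - 1 + X ≠ 0 := by linarith
  have hlog2 : Real.log 2 ≠ 0 := (Real.log_pos one_lt_two).ne'
  subst hE
  rw [Elim.one_add_mul_div_sub_eq hpb.ne' hX.ne' hD, Elim.sub_add_mul_eq hD, Real.logb,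
    Real.log_eq_of_mul_log_sub_add_eq (by linarith) hz]
  field_simp
  ring

theorem stmt_8_general (σ2 G K η p pb W lam : ℝ)
    (hσ2 : 0 < σ2) (hG : 0 < G) (hK : 0 < K) (hη : 0 < η)
    (hp : 0 < p) (hpb : 0 < pb)
    (A X : ℝ)
    (hA : A = G ^ 2 * η * p / σ2)
    (hX : X = G * η * (p * G + pb * K) / σ2)
    (zdag : ℝ) (hz1 : 1 < zdag)
    (hz : zdag * Real.log zdag - zdag + 1 = A)
    (Elim : ℝ) (hElim : Elim = pb * (zdag - 1) / (zdag - 1 + X))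
    (β : ℝ → ℝ)
    (hβ : ∀ E : ℝ, β E = -(lam * W / pb) * Real.logb 2 (1 + X * E / (pb - E))
        + lam * W * X / ((pb - E + X * E) * Real.log 2))
    (α : ℝ) (hα : α = lam * W * G * η * K / (zdag * σ2 * Real.log 2)) :
    β Elim = α := by
  have hX0 : 0 < X := by rw [hX]; positivity
  have hXA : X - A = G * η * pb * K / σ2 := by rw [hX, hA]; field_simp; ring
  rw [hβ, gradient_at_elim hpb hX0 hz1 hz hElim, hXA, hα]
  field_simp

/-- β(E^lim) = α = λW·GηK/(z†σ² ln 2): the gradient of the piecewise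
function S(E) is continuous at E^lim. -/
theorem stmt_8 (σ2 G K η p pb W lam : ℝ)
    (hσ2 : 0 < σ2) (hG : 0 < G) (hK : 0 < K) (hη : 0 < η)
    (hp : 0 < p) (hpb : 0 < pb) (hW : 0 < W) (hlam : 0 < lam)
    (A X : ℝ)
    (hA : A = G ^ 2 * η * p / σ2)
    (hX : X = G * η * (p * G + pb * K) / σ2)
    (zdag : ℝ) (hz1 : 1 < zdag)
    (hz : zdag * Real.log zdag - zdag + 1 = A)
    (Elim : ℝ) (hElim : Elim = pb * (zdag - 1) / (zdag - 1 + X))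
    (β : ℝ → ℝ)
    (hβ : ∀ E : ℝ, β E = -(lam * W / pb) * Real.logb 2 (1 + X * E / (pb - E))
        + lam * W * X / ((pb - E + X * E) * Real.log 2))
    (α : ℝ) (hα : α = lam * W * G * η * K / (zdag * σ2 * Real.log 2)) :
    β Elim = α :=
  stmt_8_general σ2 G K η p pb W lam hσ2 hG hK hη hp hpb A X hA hX zdag hz1 hz Elim hElim β hβ α hα
end

section
/- Let X > 0 and p_b > 0, and let z‡ be the unique z > 1 with z·ln z − z + 1 = X. Set E^o := p_b(z‡−1)/(z‡−1+X). Then β(E^o) = 0, where β(E) = −(1/p_b)·log₂(1 + X·E/(p_b − E)) + X/((p_b − E + X·E)·ln 2), and E^o is the unique global maximizer of g(E) = (1 − E/p_b)·log₂(1 + X·E/(p_b − E)) over [0, p_b): g is strictly increasing on [0, E^o] and strictly decreasing on [E^o, p_b). -/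
/-- With z‡ > 1 solving z ln z − z + 1 = X and E^o = p_b(z‡−1)/(z‡−1+X),
β(E^o) = 0 and E^o is the unique global maximizer of g on [0, p_b): g is strictly
increasing on [0, E^o] and strictly decreasing on [E^o, p_b). -/
theorem stmt_9 (X pb : ℝ) (hX : 0 < X) (hpb : 0 < pb)
    (zdd : ℝ) (hz1 : 1 < zdd)
    (hz : zdd * Real.log zdd - zdd + 1 = X)
    (Eo : ℝ) (hEo : Eo = pb * (zdd - 1) / (zdd - 1 + X))
    (g β : ℝ → ℝ)
    (hg : ∀ E : ℝ, g E = (1 - E / pb) * Real.logb 2 (1 + X * E / (pb - E)))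
    (hβ : ∀ E : ℝ, β E = -(1 / pb) * Real.logb 2 (1 + X * E / (pb - E))
        + X / ((pb - E + X * E) * Real.log 2)) :
    β Eo = 0 ∧
    StrictMonoOn g (Set.Icc 0 Eo) ∧
    StrictAntiOn g (Set.Ico Eo pb) ∧
    (∀ E ∈ Set.Ico (0 : ℝ) pb, E ≠ Eo → g E < g Eo) := by
  have hlog2 : (0:ℝ) < Real.log 2 := Real.log_pos (by norm_num)
  have hzd : 0 < zdd - 1 := by linarith
  have hden : 0 < zdd - 1 + X := by linarith
  have hEo_pos : 0 < Eo := by rw [hEo]; positivity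
  have hEo_lt : Eo < pb := by
    rw [hEo, div_lt_iff₀ hden]; nlinarith
  have hpbEo : pb - Eo = pb * X / (zdd - 1 + X) := by
    rw [hEo]; field_simp; ring
  have htEo : 1 + X * Eo / (pb - Eo) = zdd := by
    rw [hpbEo, hEo]; field_simp; ring
  -- φ strictly increasing on [1, ∞)
  have phiMono : StrictMonoOn (fun z => z * Real.log z - z + 1) (Set.Ici 1) := by
    apply strictMonoOn_of_deriv_pos (convex_Ici 1)
    · have hlogC : ContinuousOn Real.log (Set.Ici 1) := by
        apply Real.continuousOn_log.mono
        intro x hx; simp at hx ⊢; intro h; rw [h] at hx; linarith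
      exact ((continuousOn_id.mul hlogC).sub continuousOn_id).add continuousOn_const
    · intro x hx
      rw [interior_Ici] at hx
      have hx0 : x ≠ 0 := by intro h; rw [h] at hx; simp at hx; linarith
      have hd : HasDerivAt (fun z => z * Real.log z - z + 1) (Real.log x) x := by
        have h := (((hasDerivAt_id x).mul (Real.hasDerivAt_log hx0)).sub
          (hasDerivAt_id x)).add_const 1
        refine h.congr_deriv ?_
        simp [hx0]
      rw [hd.deriv]
      exact Real.log_pos hx
  -- key formula for β
  have key : ∀ E, 0 ≤ E → E < pb →
      β E = (X - ((1 + X * E / (pb - E)) * Real.log (1 + X * E / (pb - E))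
        - (1 + X * E / (pb - E)) + 1)) /
        (pb * Real.log 2 * (1 + X * E / (pb - E))) := by
    intro E hE0 hEpb
    have hpbE : 0 < pb - E := by linarith
    have htnn : 0 ≤ X * E / (pb - E) := by positivity
    have ht0 : (0:ℝ) < 1 + X * E / (pb - E) := by linarith
    have hsum : 0 < pb - E + X * E := by nlinarith
    rw [hβ, Real.logb]
    field_simp
    ring
  -- derivative of g is β
  have hgfun : g = fun E => (1 - E / pb) * (Real.log (1 + X * E / (pb - E)) / Real.log 2) := by
    funext E; rw [hg, Real.logb]
  have hderiv : ∀ E, 0 ≤ E → E < pb → HasDerivAt g (β E) E := by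
    intro E hE0 hEpb
    have hpbE : 0 < pb - E := by linarith
    have htnn : 0 ≤ X * E / (pb - E) := by positivity
    have ht0 : (0:ℝ) < 1 + X * E / (pb - E) := by linarith
    have hsum : 0 < pb - E + X * E := by nlinarith
    have ht : HasDerivAt (fun x => 1 + X * x / (pb - x))
        ((X * (pb - E) - X * E * (-1)) / (pb - E) ^ 2) E := by
      have h1 : HasDerivAt (fun x : ℝ => X * x) X E := by
        simpa using (hasDerivAt_id E).const_mul X
      have h2 : HasDerivAt (fun x : ℝ => pb - x) (-1) E := by
        simpa using (hasDerivAt_id E).const_sub pb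
      exact (h1.div h2 (ne_of_gt hpbE)).const_add 1
    have hlogt := ht.log (ne_of_gt ht0)
    have hu : HasDerivAt (fun x : ℝ => 1 - x / pb) (-(1 / pb)) E := by
      simpa using ((hasDerivAt_id E).div_const pb).const_sub 1
    have hd := hu.mul (hlogt.div_const (Real.log 2))
    rw [hgfun]
    refine hd.congr_deriv ?_
    rw [hβ, Real.logb]
    field_simp
    ring
  -- sign of β
  have hbpos : ∀ x, 0 < x → x < Eo → 0 < β x := by
    intro x hx0 hxE
    have hxpb : x < pb := hxE.trans hEo_lt
    have hpbx : 0 < pb - x := by linarith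
    rw [key x hx0.le hxpb]
    have ht1 : (1:ℝ) < 1 + X * x / (pb - x) := by
      have : 0 < X * x / (pb - x) := by positivity
      linarith
    have htz : 1 + X * x / (pb - x) < zdd := by
      have h1 : X * x / (pb - x) < zdd - 1 := by
        rw [div_lt_iff₀ hpbx]
        have h2 : x * (zdd - 1 + X) < pb * (zdd - 1) := by
          rw [hEo, lt_div_iff₀ hden] at hxE; linarith
        nlinarith
      linarith
    apply div_pos
    · have := phiMono (Set.mem_Ici.mpr ht1.le) (Set.mem_Ici.mpr hz1.le) htz
      simp only at this
      linarith [this.trans_eq hz]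
    · positivity
  have hbneg : ∀ x, Eo < x → x < pb → β x < 0 := by
    intro x hxE hxpb
    have hx0 : 0 < x := hEo_pos.trans hxE
    have hpbx : 0 < pb - x := by linarith
    rw [key x hx0.le hxpb]
    have htz : zdd < 1 + X * x / (pb - x) := by
      have h1 : zdd - 1 < X * x / (pb - x) := by
        rw [lt_div_iff₀ hpbx]
        have h2 : pb * (zdd - 1) < x * (zdd - 1 + X) := by
          rw [hEo, div_lt_iff₀ hden] at hxE; linarith
        nlinarith
      linarith
    have ht1 : (0:ℝ) < 1 + X * x / (pb - x) := by linarith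
    apply div_neg_of_neg_of_pos
    · have := phiMono (Set.mem_Ici.mpr hz1.le) (Set.mem_Ici.mpr (by linarith : (1:ℝ) ≤ 1 + X * x / (pb - x))) htz
      simp only at this
      rw [hz] at this
      linarith
    · positivity
  -- β Eo = 0
  have hβEo : β Eo = 0 := by
    rw [key Eo hEo_pos.le hEo_lt, htEo, hz]
    simp
  -- strict monotone on [0, Eo]
  have hmono : StrictMonoOn g (Set.Icc 0 Eo) := by
    apply strictMonoOn_of_deriv_pos (convex_Icc 0 Eo)
    · intro x hx
      exact (hderiv x hx.1 (lt_of_le_of_lt hx.2 hEo_lt)).continuousAt.continuousWithinAt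
    · intro x hx
      rw [interior_Icc] at hx
      rw [(hderiv x hx.1.le (hx.2.trans hEo_lt)).deriv]
      exact hbpos x hx.1 hx.2
  have hanti : StrictAntiOn g (Set.Ico Eo pb) := by
    apply strictAntiOn_of_deriv_neg (convex_Ico Eo pb)
    · intro x hx
      exact (hderiv x (hEo_pos.le.trans hx.1) hx.2).continuousAt.continuousWithinAt
    · intro x hx
      rw [interior_Ico] at hx
      rw [(hderiv x (hEo_pos.trans hx.1).le hx.2).deriv]
      exact hbneg x hx.1 hx.2
  refine ⟨hβEo, hmono, hanti, ?_⟩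
  intro E hE hne
  rcases lt_or_gt_of_ne hne with h | h
  · exact hmono ⟨hE.1, h.le⟩ ⟨hEo_pos.le, le_refl Eo⟩ h
  · exact hanti ⟨le_refl Eo, hEo_lt⟩ ⟨h.le, hE.2⟩ h
end

section
/- Fix σ², G, K, η, p, p_b, W, λ > 0, set A := G²ηp/σ², X := Gη(pG + p_b·K)/σ², let z† and z‡ be the unique solutions z > 1 of z·ln z − z + 1 = A and z·ln z − z + 1 = X respectively, E^lim := p_b(z†−1)/(z†−1+X), E^o := p_b(z‡−1)/(z‡−1+X), and α := λW·G·η·K/(z†·σ²·ln 2). Define S : [0, E^o] → ℝ by S(E) = λW·Gη(pG + EK)/(z†·σ²·ln 2) for 0 ≤ E ≤ E^lim and S(E) = λW(1 − E/p_b)·log₂(1 + X·E/(p_b − E)) for E^lim < E ≤ E^o. Then S is continuous, monotone increasing and concave on [0, E^o]; S is differentiable on (0, E^o) with derivative equal to the constant α on (0, E^lim), strictly decreasing on (E^lim, E^o), and the derivative tends to 0 as E → E^o. -/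
open Set Filter

-- f(z) = z log z - z + 1 is strictly monotone on [1, ∞)
lemma stmt11_f_mono : StrictMonoOn (fun z : ℝ => z * Real.log z - z + 1) (Set.Ici 1) := by
  apply strictMonoOn_of_deriv_pos (convex_Ici 1)
  · intro z hz
    have hz0 : z ≠ 0 := by simp at hz; intro h; simp [h] at hz; linarith
    exact (((continuousAt_id.mul (Real.continuousAt_log hz0)).sub
      continuousAt_id).add continuousAt_const).continuousWithinAt
  · intro z hz
    rw [interior_Ici, Set.mem_Ioi] at hz
    have hz0 : z ≠ 0 := by intro h; rw [h] at hz; linarith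
    have hd : HasDerivAt (fun z : ℝ => z * Real.log z - z + 1) (Real.log z) z := by
      have h1 : HasDerivAt (fun z : ℝ => z * Real.log z)
          (1 * Real.log z + z * z⁻¹) z :=
        (hasDerivAt_id z).mul (Real.hasDerivAt_log hz0)
      have h2 := (h1.sub (hasDerivAt_id z)).add_const 1
      refine HasDerivAt.congr_deriv h2 ?_
      simp [hz0]
    rw [hd.deriv]
    exact Real.log_pos hz

-- φ(w) = (w - 1 + X)/w - log w is strictly antitone on [1, ∞), for X > 0
lemma stmt11_phi_anti (X : ℝ) (hX : 0 < X) :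
    StrictAntiOn (fun w : ℝ => (w - 1 + X) / w - Real.log w) (Set.Ici 1) := by
  apply strictAntiOn_of_deriv_neg (convex_Ici 1)
  · intro w hw
    have hw0 : w ≠ 0 := by simp at hw; positivity
    exact ((((continuousAt_id.sub continuousAt_const).add continuousAt_const).div
      continuousAt_id hw0).sub (Real.continuousAt_log hw0)).continuousWithinAt
  · intro w hw
    rw [interior_Ici, Set.mem_Ioi] at hw
    have hw0 : (0:ℝ) < w := by linarith
    have hd : HasDerivAt (fun w : ℝ => (w - 1 + X) / w - Real.log w)
        ((1 - X - w) / w ^ 2) w := by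
      have h1 : HasDerivAt (fun w : ℝ => w - 1 + X) 1 w :=
        ((hasDerivAt_id w).sub_const 1).add_const X
      have h2 : HasDerivAt (fun w : ℝ => (w - 1 + X) / w)
          ((1 * w - (w - 1 + X) * 1) / w ^ 2) w := h1.div (hasDerivAt_id w) (ne_of_gt hw0)
      have h3 := h2.sub (Real.hasDerivAt_log (ne_of_gt hw0))
      refine HasDerivAt.congr_deriv h3 ?_
      field_simp
      ring
    rw [hd.deriv]
    apply div_neg_of_neg_of_pos
    · linarith
    · positivity

/-- the derivative function of the second piece -/
noncomputable def stmt11_D (lam W pb X : ℝ) : ℝ → ℝ := fun E =>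
  lam * W / Real.log 2 / pb *
    ((1 + X * E / (pb - E) - 1 + X) / (1 + X * E / (pb - E))
      - Real.log (1 + X * E / (pb - E)))

-- derivative of the second piece
lemma stmt11_g_deriv (lam W pb X : ℝ) (hpb : 0 < pb) (hX : 0 < X)
    (E : ℝ) (hE0 : 0 < E) (hEpb : E < pb) :
    HasDerivAt (fun E => lam * W * (1 - E / pb) * Real.logb 2 (1 + X * E / (pb - E)))
      (stmt11_D lam W pb X E) E := by
  have hpbE : 0 < pb - E := by linarith
  have hq0 : 0 < 1 + X * E / (pb - E) := by positivity
  have hln2 : Real.log 2 ≠ 0 := ne_of_gt (Real.log_pos (by norm_num))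
  have hden : HasDerivAt (fun E : ℝ => pb - E) (-1) E := by
    simpa using (hasDerivAt_id E).const_sub pb
  have hnum : HasDerivAt (fun E : ℝ => X * E) X E := by
    simpa using (hasDerivAt_id E).const_mul X
  have hq : HasDerivAt (fun E : ℝ => 1 + X * E / (pb - E))
      ((X * (pb - E) - X * E * (-1)) / (pb - E) ^ 2) E :=
    (hnum.div hden (ne_of_gt hpbE)).const_add 1
  have hlog : HasDerivAt (fun E : ℝ => Real.log (1 + X * E / (pb - E)))
      ((1 + X * E / (pb - E))⁻¹ * ((X * (pb - E) - X * E * (-1)) / (pb - E) ^ 2)) E :=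
    by have := (Real.hasDerivAt_log (ne_of_gt hq0)).comp E hq; exact this
  have hv : HasDerivAt (fun E : ℝ => Real.logb 2 (1 + X * E / (pb - E)))
      ((1 + X * E / (pb - E))⁻¹ * ((X * (pb - E) - X * E * (-1)) / (pb - E) ^ 2) / Real.log 2)
      E := by
    simp only [Real.logb, div_eq_mul_inv]
    exact hlog.mul_const _
  have hu : HasDerivAt (fun E : ℝ => lam * W * (1 - E / pb)) (lam * W * (-(1 / pb))) E := by
    exact (((hasDerivAt_id E).div_const pb).const_sub 1).const_mul (lam * W)
  have h := hu.mul hv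
  refine HasDerivAt.congr_deriv h ?_
  rw [Real.logb]
  unfold stmt11_D
  field_simp
  ring

-- continuity of the derivative expression
lemma stmt11_D_cont (lam W pb X : ℝ) (hX : 0 < X)
    (E : ℝ) (hE0 : 0 < E) (hEpb : E < pb) :
    ContinuousAt (stmt11_D lam W pb X) E := by
  have hpbE : (0:ℝ) < pb - E := by linarith
  have hq : (0:ℝ) < 1 + X * E / (pb - E) := by positivity
  have hzfc : ContinuousAt (fun E : ℝ => 1 + X * E / (pb - E)) E :=
    continuousAt_const.add ((continuousAt_const.mul continuousAt_id).div
      (continuousAt_const.sub continuousAt_id) (ne_of_gt hpbE))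
  unfold stmt11_D
  apply ContinuousAt.mul continuousAt_const
  apply ContinuousAt.sub
  · exact ((hzfc.sub continuousAt_const).add continuousAt_const).div hzfc (ne_of_gt hq)
  · exact ContinuousAt.comp (g := Real.log) (f := fun E : ℝ => 1 + X * E / (pb - E))
      (Real.continuousAt_log (ne_of_gt hq)) hzfc
/-- The piecewise closed-form throughput S is continuous, monotone
increasing and concave on [0, E^o]; differentiable on (0, E^o) with derivative equal
to the constant α on (0, E^lim), strictly decreasing on (E^lim, E^o), and tending
to 0 as E → E^o from below. -/
theorem stmt_11 (σ2 G K η p pb W lam : ℝ)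
    (hσ2 : 0 < σ2) (hG : 0 < G) (hK : 0 < K) (hη : 0 < η)
    (hp : 0 < p) (hpb : 0 < pb) (hW : 0 < W) (hlam : 0 < lam)
    (A X : ℝ)
    (hA : A = G ^ 2 * η * p / σ2)
    (hX : X = G * η * (p * G + pb * K) / σ2)
    (zdag : ℝ) (hzdag1 : 1 < zdag)
    (hzdag : zdag * Real.log zdag - zdag + 1 = A)
    (zdd : ℝ) (hzdd1 : 1 < zdd)
    (hzdd : zdd * Real.log zdd - zdd + 1 = X)
    (Elim Eo α : ℝ)
    (hElim : Elim = pb * (zdag - 1) / (zdag - 1 + X))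
    (hEo : Eo = pb * (zdd - 1) / (zdd - 1 + X))
    (hα : α = lam * W * G * η * K / (zdag * σ2 * Real.log 2))
    (S : ℝ → ℝ)
    (hS1 : ∀ E : ℝ, 0 ≤ E → E ≤ Elim →
      S E = lam * W * G * η * (p * G + E * K) / (zdag * σ2 * Real.log 2))
    (hS2 : ∀ E : ℝ, Elim < E → E ≤ Eo →
      S E = lam * W * (1 - E / pb) * Real.logb 2 (1 + X * E / (pb - E))) :
    ContinuousOn S (Set.Icc 0 Eo) ∧
    MonotoneOn S (Set.Icc 0 Eo) ∧
    ConcaveOn ℝ (Set.Icc 0 Eo) S ∧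
    ∃ S' : ℝ → ℝ,
      (∀ E ∈ Set.Ioo (0 : ℝ) Eo, HasDerivAt S (S' E) E) ∧
      (∀ E ∈ Set.Ioo (0 : ℝ) Elim, S' E = α) ∧
      StrictAntiOn S' (Set.Ioo Elim Eo) ∧
      Filter.Tendsto S' (nhdsWithin Eo (Set.Iio Eo)) (nhds 0) := by
  have hln2 : 0 < Real.log 2 := Real.log_pos (by norm_num)
  have hzdag0 : (0:ℝ) < zdag := by linarith
  have hzdd0 : (0:ℝ) < zdd := by linarith
  have hA0 : 0 < A := by rw [hA]; positivity
  have hX0 : 0 < X := by rw [hX]; positivity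
  have hXA : A < X := by
    have h : X - A = G * η * (pb * K) / σ2 := by rw [hA, hX]; field_simp; ring
    have h2 : 0 < G * η * (pb * K) / σ2 := by positivity
    linarith
  have hzz : zdag < zdd := by
    have h := stmt11_f_mono.lt_iff_lt (Set.mem_Ici.mpr hzdag1.le) (Set.mem_Ici.mpr hzdd1.le)
    exact h.mp (by rw [hzdag, hzdd]; exact hXA)
  have hdagX : 0 < zdag - 1 + X := by linarith
  have hddX : 0 < zdd - 1 + X := by linarith
  have hElim0 : 0 < Elim := by
    rw [hElim]; exact div_pos (mul_pos hpb (by linarith)) hdagX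
  have hElimpb : Elim < pb := by
    rw [hElim, div_lt_iff₀ hdagX]
    have key : pb * (zdag - 1 + X) - pb * (zdag - 1) = pb * X := by ring
    linarith [mul_pos hpb hX0]
  have hEo0 : 0 < Eo := by
    rw [hEo]; exact div_pos (mul_pos hpb (by linarith)) hddX
  have hEopb : Eo < pb := by
    rw [hEo, div_lt_iff₀ hddX]
    have key : pb * (zdd - 1 + X) - pb * (zdd - 1) = pb * X := by ring
    linarith [mul_pos hpb hX0]
  have hElimEo : Elim < Eo := by
    rw [hElim, hEo, div_lt_div_iff₀ hdagX hddX]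
    have key : pb * (zdd - 1) * (zdag - 1 + X) - pb * (zdag - 1) * (zdd - 1 + X)
        = pb * X * (zdd - zdag) := by ring
    linarith [mul_pos (mul_pos hpb hX0) (sub_pos.mpr hzz)]
  have hpbElim : 0 < pb - Elim := by linarith
  have hpbEo : 0 < pb - Eo := by linarith
  -- values of the auxiliary function z at the endpoints
  have hzfElim : 1 + X * Elim / (pb - Elim) = zdag := by
    have e1 : pb - Elim = pb * X / (zdag - 1 + X) := by
      rw [hElim]; field_simp; ring
    rw [e1, hElim]
    field_simp
    ring
  have hzfEo : 1 + X * Eo / (pb - Eo) = zdd := by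
    have e1 : pb - Eo = pb * X / (zdd - 1 + X) := by
      rw [hEo]; field_simp; ring
    rw [e1, hEo]
    field_simp
    ring
  have hzf_mono : ∀ a b : ℝ, a < b → b < pb →
      1 + X * a / (pb - a) < 1 + X * b / (pb - b) := by
    intro a b hab hbpb
    have h1 : 0 < pb - a := by linarith
    have h2 : 0 < pb - b := by linarith
    have h3 : X * a / (pb - a) < X * b / (pb - b) := by
      rw [div_lt_div_iff₀ h1 h2]
      have key : X * b * (pb - a) - X * a * (pb - b) = X * pb * (b - a) := by ring
      linarith [mul_pos (mul_pos hX0 hpb) (sub_pos.mpr hab)]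
    linarith
  have hzf_gt1 : ∀ E : ℝ, 0 < E → E < pb → 1 < 1 + X * E / (pb - E) := by
    intro E h1 h2
    have h3 : 0 < pb - E := by linarith
    have h4 : 0 < X * E / (pb - E) := by positivity
    linarith
  -- φ values at zdag and zdd
  have hφdag : (zdag - 1 + X) / zdag - Real.log zdag = (X - A) / zdag := by
    rw [← hzdag]; field_simp; ring
  have hφdd : (zdd - 1 + X) / zdd - Real.log zdd = 0 := by
    rw [← hzdd]; field_simp; ring
  have hαval : α = lam * W / Real.log 2 / pb * ((X - A) / zdag) := by
    rw [hα, hA, hX]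
    field_simp
    ring
  have hα0 : 0 < α := by rw [hα]; positivity
  have hDElim : stmt11_D lam W pb X Elim = α := by
    unfold stmt11_D
    rw [hzfElim, hφdag, ← hαval]
  have hDEo : stmt11_D lam W pb X Eo = 0 := by
    unfold stmt11_D
    rw [hzfEo, hφdd, mul_zero]
  -- strict antitonicity of D
  have hDanti : ∀ a b : ℝ, 0 < a → a < b → b < pb →
      stmt11_D lam W pb X b < stmt11_D lam W pb X a := by
    intro a b ha hab hbpb
    have h1 := hzf_gt1 a ha (lt_trans hab hbpb)
    have h2 := hzf_mono a b hab hbpb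
    have h3 := stmt11_phi_anti X hX0 (Set.mem_Ici.mpr h1.le)
      (Set.mem_Ici.mpr (le_of_lt (lt_trans h1 h2))) h2
    have hc : 0 < lam * W / Real.log 2 / pb := by positivity
    unfold stmt11_D
    exact mul_lt_mul_of_pos_left h3 hc
  -- the linear piece
  have hLderiv : ∀ E : ℝ, HasDerivAt
      (fun E => lam * W * G * η * (p * G + E * K) / (zdag * σ2 * Real.log 2)) α E := by
    intro E
    have h1 : HasDerivAt (fun E : ℝ => p * G + E * K) K E := by
      simpa using ((hasDerivAt_id E).mul_const K).const_add (p * G)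
    have h2 := (h1.const_mul (lam * W * G * η)).div_const (zdag * σ2 * Real.log 2)
    rw [hα]
    convert h2 using 1
  -- derivative on (0, Elim)
  have hd1 : ∀ E ∈ Set.Ioo (0:ℝ) Elim, HasDerivAt S α E := by
    intro E hE
    apply (hLderiv E).congr_of_eventuallyEq
    filter_upwards [isOpen_Ioo.mem_nhds hE] with y hy
    exact hS1 y hy.1.le hy.2.le
  -- derivative on (Elim, Eo)
  have hd2 : ∀ E ∈ Set.Ioo Elim Eo, HasDerivAt S (stmt11_D lam W pb X E) E := by
    intro E hE
    apply (stmt11_g_deriv lam W pb X hpb hX0 E (lt_trans hElim0 hE.1)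
      (lt_trans hE.2 hEopb)).congr_of_eventuallyEq
    filter_upwards [isOpen_Ioo.mem_nhds hE] with y hy
    exact hS2 y hy.1 hy.2.le
  -- matching of the two pieces at Elim
  have hmatch : lam * W * G * η * (p * G + Elim * K) / (zdag * σ2 * Real.log 2)
      = lam * W * (1 - Elim / pb) * Real.logb 2 (1 + X * Elim / (pb - Elim)) := by
    have hnum : lam * W * G * η * (p * G + Elim * K) / (zdag * σ2 * Real.log 2)
        = lam * W / Real.log 2 * ((A + (X - A) * Elim / pb) / zdag) := by
      rw [hA, hX]; field_simp; ring
    have hlog : Real.log zdag = (A + zdag - 1) / zdag := by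
      rw [eq_div_iff (ne_of_gt hzdag0)]
      linear_combination hzdag
    rw [hnum, hzfElim, Real.logb, hlog, hElim]
    field_simp
    ring
  have hSElim1 : S Elim = lam * W * G * η * (p * G + Elim * K) / (zdag * σ2 * Real.log 2) :=
    hS1 Elim hElim0.le le_rfl
  -- derivative at Elim
  have hdElim : HasDerivAt S α Elim := by
    have hB : HasDerivWithinAt S α (Set.Iic Elim) Elim := by
      apply ((hLderiv Elim).hasDerivWithinAt).congr_of_eventuallyEq ?_ hSElim1
      filter_upwards [self_mem_nhdsWithin,
        mem_nhdsWithin_of_mem_nhds (Ioi_mem_nhds hElim0)] with y hy1 hy2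
      exact hS1 y (le_of_lt hy2) hy1
    have hA2 : HasDerivWithinAt S α (Set.Ici Elim) Elim := by
      apply hasDerivWithinAt_Ici_of_tendsto_deriv (s := Set.Ioo Elim Eo)
      · intro y hy
        exact (hd2 y hy).differentiableAt.differentiableWithinAt
      · have hgc : ContinuousAt
            (fun E => lam * W * (1 - E / pb) * Real.logb 2 (1 + X * E / (pb - E))) Elim :=
          (stmt11_g_deriv lam W pb X hpb hX0 Elim hElim0 hElimpb).continuousAt
        apply hgc.continuousWithinAt.congr
        · intro y hy
          exact hS2 y hy.1 hy.2.le
        · rw [hSElim1, hmatch]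
      · exact Ioo_mem_nhdsGT_of_mem ⟨le_rfl, hElimEo⟩
      · have h1 : Filter.Tendsto (stmt11_D lam W pb X) (nhdsWithin Elim (Set.Ioi Elim))
            (nhds α) := by
          have h2 := (stmt11_D_cont lam W pb X hX0 Elim hElim0 hElimpb).tendsto
          rw [hDElim] at h2
          exact h2.mono_left nhdsWithin_le_nhds
        apply h1.congr'
        filter_upwards [Ioo_mem_nhdsGT_of_mem ⟨le_rfl, hElimEo⟩] with y hy
        exact ((hd2 y hy).deriv).symm
    simpa using hB.union hA2
  -- the derivative function
  set S' : ℝ → ℝ := fun E => if E ≤ Elim then α else stmt11_D lam W pb X E with hS'def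
  have hSd : ∀ E ∈ Set.Ioo (0:ℝ) Eo, HasDerivAt S (S' E) E := by
    intro E hE
    rcases lt_trichotomy E Elim with h | h | h
    · rw [hS'def]; simp only [if_pos h.le]
      exact hd1 E ⟨hE.1, h⟩
    · rw [hS'def]; simp only [if_pos h.le]
      rw [h]; exact hdElim
    · rw [hS'def]; simp only [if_neg (not_le.mpr h)]
      exact hd2 E ⟨h, hE.2⟩
  have hS'nonneg : ∀ E ∈ Set.Ioo (0:ℝ) Eo, 0 ≤ S' E := by
    intro E hE
    rw [hS'def]
    by_cases h : E ≤ Elim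
    · simp only [if_pos h]; exact hα0.le
    · simp only [if_neg h]
      have := hDanti E Eo hE.1 hE.2 hEopb
      rw [hDEo] at this
      exact this.le
  have hS'anti : AntitoneOn S' (Set.Ioo (0:ℝ) Eo) := by
    intro x hx y hy hxy
    rw [hS'def]
    by_cases hyl : y ≤ Elim
    · have hxl : x ≤ Elim := le_trans hxy hyl
      simp only [if_pos hxl, if_pos hyl, le_refl]
    · by_cases hxl : x ≤ Elim
      · simp only [if_pos hxl, if_neg hyl]
        have := hDanti Elim y hElim0 (not_le.mp hyl) (lt_trans hy.2 hEopb)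
        rw [hDElim] at this
        exact this.le
      · simp only [if_neg hxl, if_neg hyl]
        rcases eq_or_lt_of_le hxy with h | h
        · rw [h]
        · exact (hDanti x y (lt_trans hElim0 (not_le.mp hxl)) h (lt_trans hy.2 hEopb)).le
  -- continuity
  have hScont : ContinuousOn S (Set.Icc 0 Eo) := by
    intro x hx
    rcases eq_or_lt_of_le hx.1 with h0 | h0
    · have hxElim : x < Elim := by rw [← h0]; exact hElim0
      apply ContinuousWithinAt.congr_of_eventuallyEq
        (((hLderiv x).continuousAt).continuousWithinAt)
      · filter_upwards [self_mem_nhdsWithin,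
          mem_nhdsWithin_of_mem_nhds (Iio_mem_nhds hxElim)] with y hy1 hy2
        exact hS1 y hy1.1 hy2.le
      · exact hS1 x h0.le hxElim.le
    · rcases eq_or_lt_of_le hx.2 with hEo' | hEo'
      · subst hEo'
        apply ContinuousWithinAt.congr_of_eventuallyEq
          (((stmt11_g_deriv lam W pb X hpb hX0 x hEo0 hEopb).continuousAt).continuousWithinAt)
        · filter_upwards [self_mem_nhdsWithin,
            mem_nhdsWithin_of_mem_nhds (Ioi_mem_nhds hElimEo)] with y hy1 hy2
          exact hS2 y hy2 hy1.2
        · exact hS2 x hElimEo le_rfl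
      · exact ((hSd x ⟨h0, hEo'⟩).continuousAt).continuousWithinAt
  have hdiff : DifferentiableOn ℝ S (interior (Set.Icc 0 Eo)) := by
    rw [interior_Icc]
    intro y hy
    exact (hSd y hy).differentiableAt.differentiableWithinAt
  have hmono : MonotoneOn S (Set.Icc 0 Eo) := by
    apply monotoneOn_of_deriv_nonneg (convex_Icc 0 Eo) hScont hdiff
    intro y hy
    rw [interior_Icc] at hy
    rw [(hSd y hy).deriv]
    exact hS'nonneg y hy
  have hconc : ConcaveOn ℝ (Set.Icc 0 Eo) S := by
    apply AntitoneOn.concaveOn_of_deriv (convex_Icc 0 Eo) hScont hdiff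
    rw [interior_Icc]
    intro x hx y hy hxy
    rw [(hSd x hx).deriv, (hSd y hy).deriv]
    exact hS'anti hx hy hxy
  refine ⟨hScont, hmono, hconc, S', hSd, ?_, ?_, ?_⟩
  · intro E hE
    rw [hS'def]; simp only [if_pos hE.2.le]
  · intro x hx y hy hxy
    rw [hS'def]
    simp only [if_neg (not_le.mpr hx.1), if_neg (not_le.mpr hy.1)]
    exact hDanti x y (lt_trans hElim0 hx.1) hxy (lt_trans hy.2 hEopb)
  · have h1 : Filter.Tendsto (stmt11_D lam W pb X) (nhdsWithin Eo (Set.Iio Eo)) (nhds 0) := by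
      have h2 := (stmt11_D_cont lam W pb X hX0 Eo hEo0 hEopb).tendsto
      rw [hDEo] at h2
      exact h2.mono_left nhdsWithin_le_nhds
    apply h1.congr'
    filter_upwards [Ioo_mem_nhdsLT_of_mem ⟨hElimEo, le_rfl⟩] with y hy
    rw [hS'def]
    exact (if_neg (not_le.mpr hy.1)).symm
end

section
/- Fix σ², G, K, η, p, p_b, W, λ > 0, set A := G²ηp/σ², X := Gη(pG + p_b·K)/σ², let z† solve z·ln z − z + 1 = A with z† > 1, α := λW·G·η·K/(z†·σ²·ln 2), E^lim := p_b(z†−1)/(z†−1+X), and E^o := p_b(z‡−1)/(z‡−1+X) with z‡ > 1 solving z·ln z − z + 1 = X. For 0 ≤ ν < α, let z^§(ν) be the unique z > 1 with z·ln z + (ν·p_b·ln 2/(λW) − 1)·z + 1 = X and set γ(ν) := p_b(z^§(ν)−1)σ²/((z^§(ν)−1)σ² + Gη(pG + p_b·K)). Then γ(ν) is the unique E ∈ (E^lim, E^o] satisfying β(E) = ν, where β(E) = −(λW/p_b)·log₂(1 + X·E/(p_b − E)) + λW·X/((p_b − E + X·E)·ln 2); moreover γ is strictly decreasing on [0, α),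 γ(0) = E^o, and γ(ν) → E^lim as ν → α from below. -/
/-! Substituting `E = p_b (z - 1) / (z - 1 + X)`, i.e. `z = 1 + X E / (p_b - E)`, turns `β(E)`
into `λW / (p_b ln 2) · g(z)` with `g(z) = (X - (z ln z - z + 1)) / z`, which is strictly
decreasing on `[1, ∞)`. The equation defining `z^§(ν)` says `g(z^§(ν)) = ν p_b ln 2 / (λW)`,
while `g(z‡) = 0` and `g(z†) = α p_b ln 2 / (λW)`. Hence `z^§` inverts a strictly decreasing
function along a linear function of `ν`: it takes values in `(z†, z‡]`, decreases strictly,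
starts at `z‡` and tends to `z†` as `ν → α⁻`. The increasing substitution carries all of
this over to `γ`, and uniqueness holds because `β` is strictly decreasing on `[0, p_b)`. -/

open Real Set Filter Topology InformationTheory

theorem tendsto_of_strictAntiOn_Ici {ι α β : Type*} [LinearOrder α] [TopologicalSpace α]
    [OrderTopology α] [LinearOrder β] [TopologicalSpace β] [OrderTopology β]
    {g : α → β} {a : α} (hg : StrictAntiOn g (Ici a)) {l : Filter ι} {z : ι → α}
    (hza : ∀ᶠ i in l, a ≤ z i) (hgz : Tendsto (g ∘ z) l (𝓝 (g a))) :
    Tendsto z l (𝓝 a) := by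
  refine tendsto_order.2 ⟨fun b hb => hza.mono fun i hi => hb.trans_le hi, fun b hb => ?_⟩
  filter_upwards [hza, (tendsto_order.1 hgz).1 (g b) (hg self_mem_Ici hb.le hb)] with i hi hgi
  exact (hg.lt_iff_gt hb.le hi).1 hgi

section SolutionOfStrictAnti

variable {s : Set ℝ} {g z : ℝ → ℝ} {κ α : ℝ}

theorem lt_apply_of_comp_eq_mul (hg : StrictAntiOn g s)
    (hz : ∀ ν ∈ Ico 0 α, z ν ∈ s ∧ g (z ν) = κ * ν) (hκ : 0 < κ) {a : ℝ}
    (ha : a ∈ s) (hga : g a = κ * α) {ν : ℝ} (hν : ν ∈ Ico 0 α) : a < z ν := by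
  refine (hg.lt_iff_gt (hz ν hν).1 ha).1 ?_
  rw [(hz ν hν).2, hga]
  exact mul_lt_mul_of_pos_left hν.2 hκ

theorem apply_le_of_comp_eq_mul (hg : StrictAntiOn g s)
    (hz : ∀ ν ∈ Ico 0 α, z ν ∈ s ∧ g (z ν) = κ * ν) (hκ : 0 < κ) {b : ℝ}
    (hb : b ∈ s) (hgb : g b = 0) {ν : ℝ} (hν : ν ∈ Ico 0 α) : z ν ≤ b := by
  refine (hg.le_iff_ge hb (hz ν hν).1).1 ?_
  rw [(hz ν hν).2, hgb]
  exact mul_nonneg hκ.le hν.1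

theorem strictAntiOn_of_comp_eq_mul (hg : StrictAntiOn g s)
    (hz : ∀ ν ∈ Ico 0 α, z ν ∈ s ∧ g (z ν) = κ * ν) (hκ : 0 < κ) :
    StrictAntiOn z (Ico 0 α) := fun ν₁ h₁ ν₂ h₂ hlt => by
  refine (hg.lt_iff_gt (hz ν₁ h₁).1 (hz ν₂ h₂).1).1 ?_
  rw [(hz ν₁ h₁).2, (hz ν₂ h₂).2]
  exact mul_lt_mul_of_pos_left hlt hκ

theorem apply_zero_of_comp_eq_mul (hg : StrictAntiOn g s)
    (hz : ∀ ν ∈ Ico 0 α, z ν ∈ s ∧ g (z ν) = κ * ν) (hα : 0 < α) {b : ℝ}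
    (hb : b ∈ s) (hgb : g b = 0) : z 0 = b :=
  hg.injOn (hz 0 ⟨le_rfl, hα⟩).1 hb (by rw [(hz 0 ⟨le_rfl, hα⟩).2, hgb, mul_zero])

theorem tendsto_of_comp_eq_mul (hg : StrictAntiOn g s)
    (hz : ∀ ν ∈ Ico 0 α, z ν ∈ s ∧ g (z ν) = κ * ν) (hκ : 0 < κ) (hα : 0 < α)
    {a : ℝ} (hs : Ici a ⊆ s) (hga : g a = κ * α) : Tendsto z (𝓝[<] α) (𝓝 a) := by
  have hev : ∀ᶠ ν in 𝓝[<] α, ν ∈ Ico 0 α := Ico_mem_nhdsLT hα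
  refine tendsto_of_strictAntiOn_Ici (hg.mono hs) ?_ ?_
  · filter_upwards [hev] with ν hν
    exact (lt_apply_of_comp_eq_mul hg hz hκ (hs self_mem_Ici) hga hν).le
  · rw [hga]
    refine (tendsto_nhdsWithin_of_tendsto_nhds ((continuous_const_mul κ).tendsto α)).congr' ?_
    filter_upwards [hev] with ν hν
    exact (hz ν hν).2.symm

end SolutionOfStrictAnti

noncomputable section Energy

variable {pb X z E : ℝ}

def energyOfLevel (pb X z : ℝ) : ℝ := pb * (z - 1) / (z - 1 + X)

def levelOfEnergy (pb X E : ℝ) : ℝ := 1 + X * E / (pb - E)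

theorem energyOfLevel_strictMonoOn (hpb : 0 < pb) (hX : 0 < X) :
    StrictMonoOn (energyOfLevel pb X) (Ici 1) := fun a (ha : 1 ≤ a) b _ hab => by
  rw [energyOfLevel, energyOfLevel, div_lt_div_iff₀ (by linarith) (by linarith)]
  nlinarith [mul_pos (mul_pos hpb hX) (sub_pos.2 hab)]

theorem energyOfLevel_mem_Ico (hpb : 0 < pb) (hX : 0 < X) (hz : 1 ≤ z) :
    energyOfLevel pb X z ∈ Ico 0 pb := by
  have hden : 0 < z - 1 + X := by linarith
  refine ⟨div_nonneg (mul_nonneg hpb.le (by linarith)) hden.le, ?_⟩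
  rw [energyOfLevel, div_lt_iff₀ hden]
  nlinarith

theorem continuousAt_energyOfLevel (h : z - 1 + X ≠ 0) : ContinuousAt (energyOfLevel pb X) z :=
  ContinuousAt.div (by fun_prop) (by fun_prop) h

theorem one_le_levelOfEnergy (hX : 0 ≤ X) (hE : E ∈ Ico 0 pb) : 1 ≤ levelOfEnergy pb X E :=
  le_add_of_nonneg_right (div_nonneg (mul_nonneg hX hE.1) (sub_nonneg.2 hE.2.le))

theorem levelOfEnergy_strictMonoOn (hX : 0 < X) : StrictMonoOn (levelOfEnergy pb X) (Ico 0 pb) :=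
  fun a ha b hb hab => by
    have ha' : 0 < pb - a := sub_pos.2 ha.2
    have hb' : 0 < pb - b := sub_pos.2 hb.2
    rw [levelOfEnergy, levelOfEnergy, add_lt_add_iff_left, div_lt_div_iff₀ ha' hb']
    nlinarith [mul_pos (mul_pos hX (ha.1.trans_lt ha.2)) (sub_pos.2 hab)]

theorem energyOfLevel_levelOfEnergy (hX : X ≠ 0) (hpb : pb ≠ 0) (hE : E ≠ pb) :
    energyOfLevel pb X (levelOfEnergy pb X E) = E := by
  have hE' : pb - E ≠ 0 := sub_ne_zero.2 hE.symm
  have hlevel : levelOfEnergy pb X E - 1 + X = X * pb / (pb - E) := by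
    rw [levelOfEnergy]; field_simp; ring
  rw [energyOfLevel, hlevel, levelOfEnergy, add_sub_cancel_left]
  field_simp

theorem levelOfEnergy_energyOfLevel (hX : X ≠ 0) (hpb : pb ≠ 0) (hz : z - 1 + X ≠ 0) :
    levelOfEnergy pb X (energyOfLevel pb X z) = z := by
  rw [energyOfLevel, levelOfEnergy]
  have hgap : pb - pb * (z - 1) / (z - 1 + X) = pb * X / (z - 1 + X) := by field_simp; ring
  rw [hgap]
  field_simp
  ring

end Energy

noncomputable section Slope

variable {X z : ℝ}

def slopeAtLevel (X z : ℝ) : ℝ := (X - klFun z) / z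

theorem slopeAtLevel_eq_of_eq (hz : z ≠ 0) {c : ℝ} (h : z * log z + (c - 1) * z + 1 = X) :
    slopeAtLevel X z = c := by
  rw [slopeAtLevel, div_eq_iff hz, klFun_apply]
  linear_combination -h

theorem slopeAtLevel_strictAntiOn (hX : 0 < X) : StrictAntiOn (slopeAtLevel X) (Ici 1) :=
  fun a (ha : 1 ≤ a) b (hb : 1 ≤ b) hab => by
    have ha0 : 0 < a := by linarith
    have hb0 : 0 < b := by linarith
    have hlog : 1 - a / b ≤ log b - log a := by
      rw [← log_div hb0.ne' ha0.ne', ← inv_div]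
      exact one_sub_inv_le_log_of_pos (div_pos hb0 ha0)
    have hlog' : b - a ≤ b * (log b - log a) := by
      have := mul_le_mul_of_nonneg_left hlog hb0.le
      rwa [mul_sub, mul_one, mul_div_cancel₀ _ hb0.ne'] at this
    rw [slopeAtLevel, slopeAtLevel, div_lt_div_iff₀ hb0 ha0, klFun_apply, klFun_apply]
    nlinarith [mul_le_mul_of_nonneg_left hlog' ha0.le, mul_pos (sub_pos.2 hab) hX]

end Slope

noncomputable section Throughput

variable {lam W pb X z E : ℝ}

def throughputDeriv (lam W pb X E : ℝ) : ℝ :=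
  -(lam * W / pb) * logb 2 (levelOfEnergy pb X E) + lam * W * X / ((pb - E + X * E) * log 2)

theorem throughputDeriv_energyOfLevel (hpb : 0 < pb) (hX : 0 < X) (hz : 1 ≤ z) :
    throughputDeriv lam W pb X (energyOfLevel pb X z) =
      lam * W / (pb * log 2) * slopeAtLevel X z := by
  have hden : z - 1 + X ≠ 0 := by linarith
  have hz0 : z ≠ 0 := by linarith
  have hsum :
      pb - energyOfLevel pb X z + X * energyOfLevel pb X z = pb * X * z / (z - 1 + X) := by
    rw [energyOfLevel]; field_simp; ring
  have hlog2 : log 2 ≠ 0 := (log_pos one_lt_two).ne'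
  rw [throughputDeriv, levelOfEnergy_energyOfLevel hX.ne' hpb.ne' hden, hsum, logb, slopeAtLevel,
    klFun_apply]
  field_simp
  ring

theorem throughputDeriv_eq_mul_slopeAtLevel (hX : 0 < X) (hE : E ∈ Ico 0 pb) :
    throughputDeriv lam W pb X E =
      lam * W / (pb * log 2) * slopeAtLevel X (levelOfEnergy pb X E) := by
  have hpb : 0 < pb := hE.1.trans_lt hE.2
  conv_lhs => rw [← energyOfLevel_levelOfEnergy hX.ne' hpb.ne' hE.2.ne]
  exact throughputDeriv_energyOfLevel hpb hX (one_le_levelOfEnergy hX.le hE)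

theorem throughputDeriv_strictAntiOn (hlamW : 0 < lam * W) (hX : 0 < X) :
    StrictAntiOn (throughputDeriv lam W pb X) (Ico 0 pb) := fun a ha b hb hab => by
  have hpb : 0 < pb := ha.1.trans_lt ha.2
  rw [throughputDeriv_eq_mul_slopeAtLevel hX ha, throughputDeriv_eq_mul_slopeAtLevel hX hb]
  refine mul_lt_mul_of_pos_left ?_ (by have := log_pos one_lt_two; positivity)
  exact slopeAtLevel_strictAntiOn hX (one_le_levelOfEnergy hX.le ha)
    (one_le_levelOfEnergy hX.le hb) (levelOfEnergy_strictMonoOn hX ha hb hab)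

end Throughput

theorem energyOfLevel_comp_spec {lam W pb X α a b : ℝ} {z : ℝ → ℝ} (hlamW : 0 < lam * W)
    (hpb : 0 < pb) (hX : 0 < X) (hα : 0 < α)
    (hz : ∀ ν ∈ Ico 0 α,
      z ν ∈ Ici 1 ∧ slopeAtLevel X (z ν) = pb * log 2 / (lam * W) * ν)
    (ha : 1 < a) (hga : slopeAtLevel X a = pb * log 2 / (lam * W) * α)
    (hb : 1 < b) (hgb : slopeAtLevel X b = 0) :
    (∀ ν, 0 ≤ ν → ν < α →
      energyOfLevel pb X (z ν) ∈ Ioc (energyOfLevel pb X a) (energyOfLevel pb X b) ∧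
      throughputDeriv lam W pb X (energyOfLevel pb X (z ν)) = ν ∧
      ∀ E ∈ Ioc (energyOfLevel pb X a) (energyOfLevel pb X b),
        throughputDeriv lam W pb X E = ν → E = energyOfLevel pb X (z ν)) ∧
    StrictAntiOn (energyOfLevel pb X ∘ z) (Ico 0 α) ∧
    energyOfLevel pb X (z 0) = energyOfLevel pb X b ∧
    Tendsto (energyOfLevel pb X ∘ z) (𝓝[<] α) (𝓝 (energyOfLevel pb X a)) := by
  have hκ : 0 < pb * log 2 / (lam * W) := by have := log_pos one_lt_two; positivity
  have hg := slopeAtLevel_strictAntiOn hX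
  have he := energyOfLevel_strictMonoOn hpb hX
  have hmem : ∀ ν ∈ Ico 0 α,
      energyOfLevel pb X (z ν) ∈ Ioc (energyOfLevel pb X a) (energyOfLevel pb X b) :=
    fun ν hν => ⟨he ha.le (hz ν hν).1 (lt_apply_of_comp_eq_mul hg hz hκ ha.le hga hν),
      he.monotoneOn (hz ν hν).1 hb.le (apply_le_of_comp_eq_mul hg hz hκ hb.le hgb hν)⟩
  have hsub : Ioc (energyOfLevel pb X a) (energyOfLevel pb X b) ⊆ Ico 0 pb := fun E hE =>
    ⟨(energyOfLevel_mem_Ico hpb hX ha.le).1.trans hE.1.le,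
      hE.2.trans_lt (energyOfLevel_mem_Ico hpb hX hb.le).2⟩
  have hderiv : ∀ ν ∈ Ico 0 α, throughputDeriv lam W pb X (energyOfLevel pb X (z ν)) = ν :=
    fun ν hν => by
      rw [throughputDeriv_energyOfLevel hpb hX (hz ν hν).1, (hz ν hν).2]
      field_simp
      exact mul_div_cancel_left₀ ν hlamW.ne'
  refine ⟨fun ν hν₀ hνα =>
      ⟨hmem ν ⟨hν₀, hνα⟩, hderiv ν ⟨hν₀, hνα⟩, fun E hE hE' => ?_⟩,
    he.comp_strictAntiOn (strictAntiOn_of_comp_eq_mul hg hz hκ) fun ν hν => (hz ν hν).1,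
    congrArg _ (apply_zero_of_comp_eq_mul hg hz hα hb.le hgb),
    (continuousAt_energyOfLevel (by linarith)).tendsto.comp
      (tendsto_of_comp_eq_mul hg hz hκ hα (Ici_subset_Ici.2 ha.le) hga)⟩
  have hν : ν ∈ Ico 0 α := ⟨hν₀, hνα⟩
  refine (throughputDeriv_strictAntiOn hlamW hX).injOn (hsub hE) (hsub (hmem ν hν)) ?_
  rw [hE', hderiv ν hν]

/-- For 0 ≤ ν < α, γ(ν) is the unique E ∈ (E^lim, E^o] with β(E) = ν;
moreover γ is strictly decreasing on [0, α), γ(0) = E^o and γ(ν) → E^lim as ν → α⁻. -/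
theorem stmt_14 (σ2 G K η p pb W lam : ℝ)
    (hσ2 : 0 < σ2) (hG : 0 < G) (hK : 0 < K) (hη : 0 < η)
    (hp : 0 < p) (hpb : 0 < pb) (hW : 0 < W) (hlam : 0 < lam)
    (A X : ℝ)
    (hA : A = G ^ 2 * η * p / σ2)
    (hX : X = G * η * (p * G + pb * K) / σ2)
    (zdag : ℝ) (hzdag1 : 1 < zdag)
    (hzdag : zdag * Real.log zdag - zdag + 1 = A)
    (zdd : ℝ) (hzdd1 : 1 < zdd)
    (hzdd : zdd * Real.log zdd - zdd + 1 = X)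
    (Elim Eo α : ℝ)
    (hElim : Elim = pb * (zdag - 1) / (zdag - 1 + X))
    (hEo : Eo = pb * (zdd - 1) / (zdd - 1 + X))
    (hα : α = lam * W * G * η * K / (zdag * σ2 * Real.log 2))
    (zsect : ℝ → ℝ)
    (hzsect : ∀ ν : ℝ, 0 ≤ ν → ν < α → 1 < zsect ν ∧
      zsect ν * Real.log (zsect ν)
        + (ν * pb * Real.log 2 / (lam * W) - 1) * zsect ν + 1 = X)
    (γ : ℝ → ℝ)
    (hγ : ∀ ν : ℝ, γ ν = pb * (zsect ν - 1) * σ2 /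
      ((zsect ν - 1) * σ2 + G * η * (p * G + pb * K)))
    (β : ℝ → ℝ)
    (hβ : ∀ E : ℝ, β E = -(lam * W / pb) * Real.logb 2 (1 + X * E / (pb - E))
        + lam * W * X / ((pb - E + X * E) * Real.log 2)) :
    (∀ ν : ℝ, 0 ≤ ν → ν < α →
      γ ν ∈ Set.Ioc Elim Eo ∧ β (γ ν) = ν ∧
      ∀ E ∈ Set.Ioc Elim Eo, β E = ν → E = γ ν) ∧
    StrictAntiOn γ (Set.Ico 0 α) ∧
    γ 0 = Eo ∧
    Filter.Tendsto γ (nhdsWithin α (Set.Iio α)) (nhds Elim) := by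
  have hX0 : 0 < X := by rw [hX]; positivity
  have hβe : β = throughputDeriv lam W pb X := funext hβ
  have hγe : γ = energyOfLevel pb X ∘ zsect := funext fun ν => by
    rw [hγ, Function.comp_apply, energyOfLevel, hX]
    field_simp
  have hκα : pb * log 2 / (lam * W) * α * zdag = X - A := by
    rw [hα, hX, hA]
    field_simp
    ring
  have hlevel : ∀ ν ∈ Ico 0 α,
      zsect ν ∈ Ici 1 ∧ slopeAtLevel X (zsect ν) = pb * log 2 / (lam * W) * ν := by
    intro ν hν
    obtain ⟨h1, h2⟩ := hzsect ν hν.1 hν.2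
    exact ⟨h1.le, slopeAtLevel_eq_of_eq (by positivity) (by linear_combination h2)⟩
  subst hElim hEo hβe hγe
  exact energyOfLevel_comp_spec (mul_pos hlam hW) hpb hX0 (by rw [hα]; positivity) hlevel
    hzdag1 (slopeAtLevel_eq_of_eq (by positivity) (by linear_combination hzdag + hκα))
    hzdd1 (slopeAtLevel_eq_of_eq (by positivity) (by linear_combination hzdd))
end

section
/- Fix σ², G, K, η, p, p_b, W, λ > 0, define A, X, z†, E^lim, α, z‡, E^o, γ as follows: A := G²ηp/σ², X := Gη(pG + p_b·K)/σ², z† > 1 solves z·ln z − z + 1 = A, E^lim := p_b(z†−1)/(z†−1+X), α := λW·G·η·K/(z†·σ²·ln 2), z‡ > 1 solves z·ln z − z + 1 = X, E^o := p_b(z‡−1)/(z‡−1+X), and for 0 ≤ μ < α, γ(μ) := p_b(z^§(μ)−1)σ²/((z^§(μ)−1)σ² + Gη(pG + p_b·K)) with z^§(μ) > 1 the unique solution of z·ln z + (μ·p_b·ln 2/(λW) − 1)·z + 1 = X. Define S(E) := λW·Gη(pG + EK)/(z†·σ²·ln 2) for 0 ≤ E ≤ E^lim and S(E) := λW(1 −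 E/p_b)·log₂(1 + X·E/(p_b − E)) for E^lim < E < p_b, and U(E) := S(E) − μ·E. Then: if μ ≥ α, E = 0 is a global maximizer of U on [0, p_b); if 0 < μ < α, then E = γ(μ) is the unique global maximizer of U on [0, p_b). -/
/-!
On `(E^lim, p_b)` substitute `z = 1 + X E / (p_b - E)`: with `c = λ W / ln 2` the utility becomes
`f z = (c X log z - μ p_b (z - 1)) / (z - 1 + X)`. The tangent-line inequality
`log z ≤ log w + (z - w) / w` gives `f z - f w ≤ (positive) · (z - w) · Q w`, where
`Q w = c (X - (w log w - w + 1)) - μ p_b w` is decreasing; so `f` has its strict global maximum at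
the zero `z^§(μ)` of `Q`, and `f` decreases on `[w, ∞)` whenever `Q w ≤ 0`.
On `[0, E^lim]` the utility is linear with slope `α - μ` and meets `f` at `z†`, where
`Q z† = p_b z† (α - μ)`. For `μ ≥ α` both pieces therefore peak at `E = 0`; for `μ < α` we get
`Q z† > 0`, so `z^§(μ) > z†`, i.e. `γ(μ) > E^lim`, and `γ(μ)` beats every other energy.
-/

open Real Set

noncomputable section

def rateUtility (c X m z : ℝ) : ℝ := (c * X * log z - m * (z - 1)) / (z - 1 + X)

/- `w (w - 1 + X)² / X` times the derivative of `rateUtility c X m` at `w`. -/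
def rateUtilitySlope (c X m w : ℝ) : ℝ := c * (X - (w * log w - w + 1)) - m * w

def zOfEnergy (X pb E : ℝ) : ℝ := 1 + X * E / (pb - E)

def energyOfZ (X pb z : ℝ) : ℝ := pb * (z - 1) / (z - 1 + X)

end

section ChangeOfVariables

variable {X pb E z : ℝ}

theorem one_lt_zOfEnergy (hX : 0 < X) (hE : 0 < E) (hEpb : E < pb) : 1 < zOfEnergy X pb E := by
  have : 0 < X * E / (pb - E) := div_pos (mul_pos hX hE) (sub_pos.2 hEpb)
  unfold zOfEnergy
  linarith

theorem zOfEnergy_sub_one_add (hEpb : E < pb) :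
    zOfEnergy X pb E - 1 + X = X * pb / (pb - E) := by
  have : pb - E ≠ 0 := (sub_pos.2 hEpb).ne'
  unfold zOfEnergy
  field_simp
  ring

theorem energyOfZ_zOfEnergy (hX : X ≠ 0) (hpb : pb ≠ 0) (hEpb : E < pb) :
    energyOfZ X pb (zOfEnergy X pb E) = E := by
  have : pb - E ≠ 0 := (sub_pos.2 hEpb).ne'
  rw [energyOfZ, zOfEnergy_sub_one_add hEpb, zOfEnergy]
  field_simp
  ring

theorem sub_energyOfZ (hz : z - 1 + X ≠ 0) : pb - energyOfZ X pb z = X * pb / (z - 1 + X) := by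
  unfold energyOfZ
  field_simp
  ring

theorem zOfEnergy_energyOfZ (hX : X ≠ 0) (hpb : pb ≠ 0) (hz : z - 1 + X ≠ 0) :
    zOfEnergy X pb (energyOfZ X pb z) = z := by
  rw [zOfEnergy, sub_energyOfZ hz, energyOfZ]
  field_simp
  ring

theorem lt_zOfEnergy_iff (hz : 0 < z - 1 + X) (hEpb : E < pb) :
    z < zOfEnergy X pb E ↔ energyOfZ X pb z < E := by
  have hpbE : 0 < pb - E := sub_pos.2 hEpb
  unfold zOfEnergy energyOfZ
  rw [div_lt_iff₀ hz, ← sub_lt_iff_lt_add', lt_div_iff₀ hpbE]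
  constructor <;> intro h <;> linarith

theorem energyOfZ_pos (hX : 0 < X) (hpb : 0 < pb) (hz : 1 < z) : 0 < energyOfZ X pb z :=
  div_pos (mul_pos hpb (sub_pos.2 hz)) (by linarith)

theorem energyOfZ_lt (hX : 0 < X) (hpb : 0 < pb) (hz : 0 < z - 1 + X) : energyOfZ X pb z < pb := by
  unfold energyOfZ
  rw [div_lt_iff₀ hz]
  nlinarith

theorem rateUtility_eq (c μ : ℝ) (hpb : pb ≠ 0) (hz : z - 1 + X ≠ 0) :
    rateUtility c X (μ * pb) z =
      c * (1 - energyOfZ X pb z / pb) * log z - μ * energyOfZ X pb z := by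
  unfold rateUtility energyOfZ
  field_simp
  ring

theorem rateUtility_zOfEnergy (c μ : ℝ) (hX : 0 < X) (hpb : 0 < pb) (hE : 0 < E) (hEpb : E < pb) :
    rateUtility c X (μ * pb) (zOfEnergy X pb E) =
      c * (1 - E / pb) * log (zOfEnergy X pb E) - μ * E := by
  have hD : zOfEnergy X pb E - 1 + X ≠ 0 := by linarith [one_lt_zOfEnergy hX hE hEpb]
  rw [rateUtility_eq c μ hpb.ne' hD, energyOfZ_zOfEnergy hX.ne' hpb.ne' hEpb]

end ChangeOfVariables

theorem mul_log_sub_self_le_of_le {w v : ℝ} (hw : 1 ≤ w) (hwv : w ≤ v) :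
    w * log w - w ≤ v * log v - v := by
  have hv : 0 < v := by linarith
  have hlog : 1 - w / v ≤ log v - log w := by
    have := log_le_sub_one_of_pos (div_pos (by linarith : (0 : ℝ) < w) hv)
    rw [log_div (by linarith) hv.ne'] at this
    linarith
  have h1 : v - w ≤ v * (log v - log w) := by
    have := mul_le_mul_of_nonneg_left hlog hv.le
    rwa [mul_sub, mul_one, mul_div_cancel₀ _ hv.ne'] at this
  nlinarith [mul_nonneg (sub_nonneg.2 hwv) (log_nonneg hw)]

section RateUtility

variable {c X m w z : ℝ}

/- The tangent-line bound `log z < log w + (z - w) / w`, multiplied out. -/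
theorem rateUtility_sub_mul_lt (hc : 0 < c) (hX : 0 < X) (hw : 1 < w) (hz : 1 < z) (hzw : z ≠ w) :
    (rateUtility c X m z - rateUtility c X m w) * ((z - 1 + X) * (w - 1 + X)) <
      X * (z - w) / w * rateUtilitySlope c X m w := by
  have hw0 : 0 < w := by linarith
  have hlog : log z - log w < (z - w) / w := by
    have h := log_lt_sub_one_of_pos (div_pos (by linarith : 0 < z) hw0)
      (by rwa [ne_eq, div_eq_one_iff_eq hw0.ne'])
    rwa [log_div (by linarith) hw0.ne', div_sub_one hw0.ne'] at h
  have hDz : z - 1 + X ≠ 0 := by linarith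
  have hDw : 0 < w - 1 + X := by linarith
  have hid : (rateUtility c X m z - rateUtility c X m w) * ((z - 1 + X) * (w - 1 + X)) -
      X * (z - w) / w * rateUtilitySlope c X m w =
      c * X * (w - 1 + X) * (log z - log w - (z - w) / w) := by
    unfold rateUtility rateUtilitySlope
    field_simp
    ring
  have : c * X * (w - 1 + X) * (log z - log w - (z - w) / w) < 0 :=
    mul_neg_of_pos_of_neg (by positivity) (by linarith)
  linarith

theorem rateUtility_lt_of_slope_eq_zero (hc : 0 < c) (hX : 0 < X) (hw : 1 < w) (hz : 1 < z)
    (hzw : z ≠ w) (hcrit : rateUtilitySlope c X m w = 0) :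
    rateUtility c X m z < rateUtility c X m w := by
  have h := rateUtility_sub_mul_lt (m := m) hc hX hw hz hzw
  rw [hcrit, mul_zero] at h
  have hD : 0 < (z - 1 + X) * (w - 1 + X) := mul_pos (by linarith) (by linarith)
  linarith [neg_of_mul_neg_left h hD.le]

theorem rateUtility_le_of_slope_nonpos (hc : 0 < c) (hX : 0 < X) (hw : 1 < w) (hwz : w ≤ z)
    (hcrit : rateUtilitySlope c X m w ≤ 0) :
    rateUtility c X m z ≤ rateUtility c X m w := by
  rcases hwz.eq_or_lt with rfl | hwz
  · rfl
  have h := rateUtility_sub_mul_lt (m := m) hc hX hw (hw.trans hwz) hwz.ne'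
  have hfac : 0 ≤ X * (z - w) / w := by
    have : 0 < w := by linarith
    have : 0 < z - w := sub_pos.2 hwz
    positivity
  have hD : 0 < (z - 1 + X) * (w - 1 + X) := mul_pos (by linarith) (by linarith)
  linarith [neg_of_mul_neg_left (h.trans_le (mul_nonpos_of_nonneg_of_nonpos hfac hcrit)) hD.le]

end RateUtility

section PiecewiseUtility

variable {c X pb μ A α zdag Elim : ℝ} {U : ℝ → ℝ}

theorem line_eq_rateUtility (hX : 0 < X) (hpb : 0 < pb) (hzdag : 1 < zdag)
    (hA : zdag * log zdag - zdag + 1 = A) (hα : α * (pb * zdag) = c * (X - A)) :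
    c * A / zdag + (α - μ) * energyOfZ X pb zdag = rateUtility c X (μ * pb) zdag := by
  have hz0 : zdag ≠ 0 := by positivity
  have hD : zdag - 1 + X ≠ 0 := by linarith
  have hαz : α = c * (X - A) / (pb * zdag) := by rw [← hα]; field_simp
  have hlog : log zdag = (A + zdag - 1) / zdag := by rw [eq_div_iff hz0]; linarith
  rw [hαz, rateUtility, energyOfZ, hlog]
  field_simp
  ring

theorem utility_le_utility_zero (hc : 0 < c) (hX : 0 < X) (hpb : 0 < pb) (hzdag : 1 < zdag)
    (hA : zdag * log zdag - zdag + 1 = A) (hα : α * (pb * zdag) = c * (X - A))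
    (hElim : Elim = energyOfZ X pb zdag)
    (hlin : ∀ E ∈ Icc 0 Elim, U E = c * A / zdag + (α - μ) * E)
    (hcurve : ∀ E ∈ Ioo Elim pb, U E = rateUtility c X (μ * pb) (zOfEnergy X pb E))
    (hμ : α ≤ μ) : ∀ E ∈ Ico 0 pb, U E ≤ U 0 := by
  rintro E ⟨hE0, hEpb⟩
  have hElim0 : 0 ≤ Elim := hElim ▸ (energyOfZ_pos hX hpb hzdag).le
  have hU0 : U 0 = c * A / zdag := by simpa using hlin 0 ⟨le_rfl, hElim0⟩
  rcases le_or_gt E Elim with hE | hE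
  · rw [hlin E ⟨hE0, hE⟩, hU0]
    nlinarith
  have hz : zdag < zOfEnergy X pb E := (lt_zOfEnergy_iff (by linarith) hEpb).2 (hElim ▸ hE)
  calc U E = rateUtility c X (μ * pb) (zOfEnergy X pb E) := hcurve E ⟨hE, hEpb⟩
    _ ≤ rateUtility c X (μ * pb) zdag :=
      rateUtility_le_of_slope_nonpos hc hX hzdag hz.le (by
        rw [rateUtilitySlope, hA, ← hα]
        nlinarith [mul_le_mul_of_nonneg_right hμ (by positivity : (0 : ℝ) ≤ pb * zdag)])
    _ = U Elim := by rw [hlin Elim ⟨hElim0, le_rfl⟩, hElim, line_eq_rateUtility hX hpb hzdag hA hα]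
    _ ≤ U 0 := by rw [hlin Elim ⟨hElim0, le_rfl⟩, hU0]; nlinarith

theorem utility_lt_utility_energyOfZ (hc : 0 < c) (hX : 0 < X) (hpb : 0 < pb) (hzdag : 1 < zdag)
    (hA : zdag * log zdag - zdag + 1 = A) (hα : α * (pb * zdag) = c * (X - A))
    (hElim : Elim = energyOfZ X pb zdag)
    (hlin : ∀ E ∈ Icc 0 Elim, U E = c * A / zdag + (α - μ) * E)
    (hcurve : ∀ E ∈ Ioo Elim pb, U E = rateUtility c X (μ * pb) (zOfEnergy X pb E))
    (hμ : 0 ≤ μ) (hμα : μ < α) {w : ℝ} (hw : 1 < w)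
    (hcrit : rateUtilitySlope c X (μ * pb) w = 0) :
    ∀ E ∈ Ico 0 pb, E ≠ energyOfZ X pb w → U E < U (energyOfZ X pb w) := by
  have hzw : zdag < w := by
    by_contra! h
    have := mul_log_sub_self_le_of_le hw.le h
    rw [rateUtilitySlope] at hcrit
    nlinarith [mul_pos (sub_pos.2 hμα) (mul_pos hpb (by linarith : 0 < zdag)),
      mul_nonneg (mul_nonneg hμ hpb.le) (sub_nonneg.2 h)]
  have hDw : 0 < w - 1 + X := by linarith
  have hwz : zOfEnergy X pb (energyOfZ X pb w) = w := zOfEnergy_energyOfZ hX.ne' hpb.ne' hDw.ne'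
  have hγ : energyOfZ X pb w ∈ Ioo Elim pb :=
    ⟨hElim ▸ (lt_zOfEnergy_iff (by linarith) (energyOfZ_lt hX hpb hDw)).1 (by rw [hwz]; exact hzw),
      energyOfZ_lt hX hpb hDw⟩
  have hElim0 : 0 ≤ Elim := hElim ▸ (energyOfZ_pos hX hpb hzdag).le
  rintro E ⟨hE0, hEpb⟩ hne
  rw [hcurve _ hγ, hwz]
  rcases le_or_gt E Elim with hE | hE
  · calc U E ≤ U Elim := by rw [hlin E ⟨hE0, hE⟩, hlin Elim ⟨hElim0, le_rfl⟩]; nlinarith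
      _ = rateUtility c X (μ * pb) zdag := by
        rw [hlin Elim ⟨hElim0, le_rfl⟩, hElim, line_eq_rateUtility hX hpb hzdag hA hα]
      _ < rateUtility c X (μ * pb) w :=
        rateUtility_lt_of_slope_eq_zero hc hX hw hzdag hzw.ne hcrit
  have hz : zdag < zOfEnergy X pb E := (lt_zOfEnergy_iff (by linarith) hEpb).2 (hElim ▸ hE)
  rw [hcurve E ⟨hE, hEpb⟩]
  refine rateUtility_lt_of_slope_eq_zero hc hX hw (hzdag.trans hz) (fun h => hne ?_) hcrit
  rw [← h, energyOfZ_zOfEnergy hX.ne' hpb.ne' hEpb]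

end PiecewiseUtility

theorem stmt_15_general (σ2 G K η p pb W lam μ : ℝ)
    (hσ2 : 0 < σ2) (hG : 0 < G) (hK : 0 < K) (hη : 0 < η)
    (hp : 0 < p) (hpb : 0 < pb) (hW : 0 < W) (hlam : 0 < lam)
    (A X : ℝ)
    (hA : A = G ^ 2 * η * p / σ2)
    (hX : X = G * η * (p * G + pb * K) / σ2)
    (zdag : ℝ) (hzdag1 : 1 < zdag)
    (hzdag : zdag * Real.log zdag - zdag + 1 = A)
    (Elim α : ℝ)
    (hElim : Elim = pb * (zdag - 1) / (zdag - 1 + X))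
    (hα : α = lam * W * G * η * K / (zdag * σ2 * Real.log 2))
    (zsect : ℝ → ℝ)
    (hzsect : ∀ m : ℝ, 0 ≤ m → m < α → 1 < zsect m ∧
      zsect m * Real.log (zsect m)
        + (m * pb * Real.log 2 / (lam * W) - 1) * zsect m + 1 = X)
    (γ : ℝ → ℝ)
    (hγ : ∀ m : ℝ, γ m = pb * (zsect m - 1) * σ2 /
      ((zsect m - 1) * σ2 + G * η * (p * G + pb * K)))
    (S U : ℝ → ℝ)
    (hS1 : ∀ E : ℝ, 0 ≤ E → E ≤ Elim →
      S E = lam * W * G * η * (p * G + E * K) / (zdag * σ2 * Real.log 2))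
    (hS2 : ∀ E : ℝ, Elim < E → E < pb →
      S E = lam * W * (1 - E / pb) * Real.logb 2 (1 + X * E / (pb - E)))
    (hU : ∀ E : ℝ, U E = S E - μ * E) :
    (α ≤ μ → ∀ E ∈ Set.Ico (0 : ℝ) pb, U E ≤ U 0) ∧
    (0 < μ → μ < α →
      (∀ E ∈ Set.Ico (0 : ℝ) pb, U E ≤ U (γ μ)) ∧
      (∀ E ∈ Set.Ico (0 : ℝ) pb, U E = U (γ μ) → E = γ μ)) := by
  have hlog2 : 0 < log 2 := log_pos one_lt_two
  set c := lam * W / log 2 with hc_def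
  have hc : 0 < c := by positivity
  have hX0 : 0 < X := by rw [hX]; positivity
  have hαc : α * (pb * zdag) = c * (X - A) := by rw [hα, hX, hA, hc_def]; field_simp; ring
  have hlin : ∀ E ∈ Icc 0 Elim, U E = c * A / zdag + (α - μ) * E := by
    rintro E ⟨hE0, hE⟩
    rw [hU, hS1 E hE0 hE, hα, hA, hc_def]
    field_simp
    ring
  have hElim0 : 0 ≤ Elim := hElim ▸ (energyOfZ_pos hX0 hpb hzdag1).le
  have hcurve : ∀ E ∈ Ioo Elim pb, U E = rateUtility c X (μ * pb) (zOfEnergy X pb E) := by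
    rintro E ⟨hE, hEpb⟩
    rw [hU, hS2 E hE hEpb, rateUtility_zOfEnergy c μ hX0 hpb (hElim0.trans_lt hE) hEpb, logb,
      zOfEnergy]
    ring
  refine ⟨utility_le_utility_zero hc hX0 hpb hzdag1 hzdag hαc hElim hlin hcurve,
    fun hμ hμα => ?_⟩
  obtain ⟨hw, hwX⟩ := hzsect μ hμ.le hμα
  have hcrit : rateUtilitySlope c X (μ * pb) (zsect μ) = 0 := by
    rw [rateUtilitySlope, ← hwX, hc_def]; field_simp; ring
  have hγw : γ μ = energyOfZ X pb (zsect μ) := by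
    rw [hγ, energyOfZ, hX]; field_simp
  have hlt := utility_lt_utility_energyOfZ hc hX0 hpb hzdag1 hzdag hαc hElim hlin hcurve hμ.le hμα
    hw hcrit
  rw [hγw]
  exact ⟨fun E hE => (eq_or_ne E _).elim (fun h => h ▸ le_rfl) fun h => (hlt E hE h).le,
    fun E hE hUE => by_contra fun h => (hlt E hE h).ne hUE⟩

/-- For the utility U(E) = S(E) − μE on [0, p_b): if μ ≥ α then E = 0 is a
global maximizer; if 0 < μ < α then E = γ(μ) is the unique global maximizer. -/
theorem stmt_15 (σ2 G K η p pb W lam μ : ℝ)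
    (hσ2 : 0 < σ2) (hG : 0 < G) (hK : 0 < K) (hη : 0 < η)
    (hp : 0 < p) (hpb : 0 < pb) (hW : 0 < W) (hlam : 0 < lam)
    (A X : ℝ)
    (hA : A = G ^ 2 * η * p / σ2)
    (hX : X = G * η * (p * G + pb * K) / σ2)
    (zdag : ℝ) (hzdag1 : 1 < zdag)
    (hzdag : zdag * Real.log zdag - zdag + 1 = A)
    (zdd : ℝ) (hzdd1 : 1 < zdd)
    (hzdd : zdd * Real.log zdd - zdd + 1 = X)
    (Elim Eo α : ℝ)
    (hElim : Elim = pb * (zdag - 1) / (zdag - 1 + X))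
    (hEo : Eo = pb * (zdd - 1) / (zdd - 1 + X))
    (hα : α = lam * W * G * η * K / (zdag * σ2 * Real.log 2))
    (zsect : ℝ → ℝ)
    (hzsect : ∀ m : ℝ, 0 ≤ m → m < α → 1 < zsect m ∧
      zsect m * Real.log (zsect m)
        + (m * pb * Real.log 2 / (lam * W) - 1) * zsect m + 1 = X)
    (γ : ℝ → ℝ)
    (hγ : ∀ m : ℝ, γ m = pb * (zsect m - 1) * σ2 /
      ((zsect m - 1) * σ2 + G * η * (p * G + pb * K)))
    (S U : ℝ → ℝ)
    (hS1 : ∀ E : ℝ, 0 ≤ E → E ≤ Elim →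
      S E = lam * W * G * η * (p * G + E * K) / (zdag * σ2 * Real.log 2))
    (hS2 : ∀ E : ℝ, Elim < E → E < pb →
      S E = lam * W * (1 - E / pb) * Real.logb 2 (1 + X * E / (pb - E)))
    (hU : ∀ E : ℝ, U E = S E - μ * E) :
    (α ≤ μ → ∀ E ∈ Set.Ico (0 : ℝ) pb, U E ≤ U 0) ∧
    (0 < μ → μ < α →
      (∀ E ∈ Set.Ico (0 : ℝ) pb, U E ≤ U (γ μ)) ∧
      (∀ E ∈ Set.Ico (0 : ℝ) pb, U E = U (γ μ) → E = γ μ)) :=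
  stmt_15_general σ2 G K η p pb W lam μ hσ2 hG hK hη hp hpb hW hlam A X hA hX zdag hzdag1 hzdag Elim
    α hElim hα zsect hzsect γ hγ S U hS1 hS2 hU
end

section
/- Consider N ≥ 1 AP-source pairs. For each i ∈ {1,…,N} fix G_i, K_i, p_i, λ_i > 0 and common σ², η, p_b, W > 0; define A_i := G_i²ηp_i/σ², X_i := G_iη(p_iG_i + p_b·K_i)/σ², z†_i > 1 solving z·ln z − z + 1 = A_i, E_i^lim := p_b(z†_i−1)/(z†_i−1+X_i), α_i := λ_iW·G_i·η·K_i/(z†_i·σ²·ln 2), z‡_i > 1 solving z·ln z − z + 1 = X_i, E_i^o := p_b(z‡_i−1)/(z‡_i−1+X_i), γ_i(ν) := p_b(z^§_i(ν)−1)σ²/((z^§_i(ν)−1)σ² + G_iη(p_iG_i + p_b·K_i)) for 0 ≤ ν < α_i where z^§_i(ν) > 1 solves z·ln z + (ν·p_b·ln 2/(λ_iW) − 1)·z + 1 = X_i, and S_i(E) := λ_iW·G_iη(p_iG_i + EK_i)/(z†_i·σ²·ln 2) for 0 ≤ E ≤ E_i^lim, S_i(E) := λ_iW(1 − E/p_b)·log₂(1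 + X_i·E/(p_b − E)) for E_i^lim < E ≤ E_i^o. Let 0 < E_b^tot < Σ_i E_i^o. Suppose ν ≥ 0 and E* = (E_1*,…,E_N*) satisfy: E_i* = γ_i(ν) whenever ν < α_i; 0 ≤ E_i* ≤ E_i^lim whenever ν = α_i; E_i* = 0 whenever ν > α_i; and Σ_i E_i* = E_b^tot. Then E* is a global maximizer of Σ_i S_i(E_i) over {(E_1,…,E_N) : 0 ≤ E_i ≤ E_i^o for all i, and Σ_i E_i ≤ E_b^tot}. -/
/-!
Lagrangian sufficiency: as `ν ≥ 0` and `∑ Eᵢ ≤ E_b^tot = ∑ Eᵢ*`, it suffices that each `Eᵢ*`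
maximises `Sᵢ(E) - ν E` on `[0, Eᵢ^o]`. In the variable `z = 1 + Xᵢ E / (p_b - E)` the curved piece
of `Sᵢ(E) - ν E` is `λᵢ W / ln 2 · (Xᵢ ln z - c (z - 1)) / (z - 1 + Xᵢ)` with
`c = ν p_b ln 2 / (λᵢ W)`; its `z`-derivative has the sign of `(z - 1 + Xᵢ) / z - ln z - c`, which
decreases in `z` and vanishes at `z^§ᵢ(ν)`. The linear piece of `Sᵢ` is the tangent to the curved
piece at `z†ᵢ`, of slope `αᵢ`, so for `ν ≥ αᵢ` the best response lies on the linear piece: anywhere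
in `[0, Eᵢ^lim]` when `ν = αᵢ`, and at `0` when `ν > αᵢ`.
-/

open Real Set

theorem Finset.sum_le_sum_of_sub_mul_le {ι R : Type*} [CommRing R] [PartialOrder R]
    [IsOrderedRing R] (s : Finset ι) {f : ι → R → R} {x y : ι → R} {ν B : R} (hν : 0 ≤ ν)
    (hxy : ∀ i ∈ s, f i (x i) - ν * x i ≤ f i (y i) - ν * y i)
    (hx : ∑ i ∈ s, x i ≤ B) (hy : ∑ i ∈ s, y i = B) :
    ∑ i ∈ s, f i (x i) ≤ ∑ i ∈ s, f i (y i) := by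
  have h := Finset.sum_le_sum hxy
  rw [Finset.sum_sub_distrib, Finset.sum_sub_distrib, ← Finset.mul_sum, ← Finset.mul_sum,
    hy] at h
  linear_combination h + mul_le_mul_of_nonneg_left hx hν

namespace WaterFilling

noncomputable section

/-- `energyOf p_b X` inverts `E ↦ 1 + X E / (p_b - E)`. With `c = ν p_b ln 2 / (λ W)`, on the curved
piece `penalizedRate X c z` is `ln 2 / (λ W) · (S(E) - ν E)` and `marginalGain X z` is
`p_b ln 2 / (λ W) · S'(E)`. -/
def marginalGain (X z : ℝ) : ℝ := (z - 1 + X) / z - log z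

def penalizedRate (X c z : ℝ) : ℝ := (X * log z - c * (z - 1)) / (z - 1 + X)

def energyOf (pb X z : ℝ) : ℝ := pb * (z - 1) / (z - 1 + X)

variable {X : ℝ}

theorem marginalGain_eq {z : ℝ} (hz : z ≠ 0) :
    marginalGain X z = (X - (z * log z - z + 1)) / z := by
  unfold marginalGain; field_simp; ring

theorem strictAntiOn_marginalGain (hX : 0 ≤ X) : StrictAntiOn (marginalGain X) (Ici 1) := by
  have hderiv : ∀ z : ℝ, 0 < z → HasDerivAt (marginalGain X) (-((z - 1 + X) / z ^ 2)) z := by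
    intro z hz
    have h := ((((hasDerivAt_id' z).sub_const 1).add_const X).div (hasDerivAt_id' z)
      hz.ne').sub (hasDerivAt_log hz.ne')
    exact h.congr_deriv (by field_simp; ring)
  refine strictAntiOn_of_hasDerivWithinAt_neg (f' := fun z => -((z - 1 + X) / z ^ 2))
    (convex_Ici 1) (fun z hz => ?_) (fun z hz => ?_) (fun z hz => ?_)
  · exact (hderiv z (by linarith [mem_Ici.mp hz])).continuousAt.continuousWithinAt
  · rw [interior_Ici] at hz
    exact (hderiv z (by linarith [mem_Ioi.mp hz])).hasDerivWithinAt
  · rw [interior_Ici, mem_Ioi] at hz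
    have : 0 < z - 1 + X := by linarith
    exact neg_neg_of_pos (by positivity)

theorem hasDerivAt_penalizedRate {c z : ℝ} (hz : z ≠ 0) (hzX : z - 1 + X ≠ 0) :
    HasDerivAt (penalizedRate X c) (X * (marginalGain X z - c) / (z - 1 + X) ^ 2) z := by
  have h := (((hasDerivAt_log hz).const_mul X).sub
    (((hasDerivAt_id' z).sub_const 1).const_mul c)).div
    (((hasDerivAt_id' z).sub_const 1).add_const X) hzX
  exact h.congr_deriv (by simp only [Pi.sub_apply, marginalGain]; field_simp; ring)

theorem penalizedRate_le (hX : 0 < X) {c z₀ z : ℝ} (hz₀ : 1 ≤ z₀)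
    (hc : marginalGain X z₀ = c) (hz : 1 ≤ z) : penalizedRate X c z ≤ penalizedRate X c z₀ := by
  set f' := fun z => X * (marginalGain X z - c) / (z - 1 + X) ^ 2
  have hderiv : ∀ z : ℝ, 1 ≤ z → HasDerivAt (penalizedRate X c) (f' z) z := fun z hz =>
    hasDerivAt_penalizedRate (by positivity) (by linarith)
  have hcont : ContinuousOn (penalizedRate X c) (Ici 1) := fun z hz =>
    (hderiv z hz).continuousAt.continuousWithinAt
  have hanti := strictAntiOn_marginalGain hX.le
  rcases le_total z z₀ with hle | hle
  · refine monotoneOn_of_hasDerivWithinAt_nonneg (f' := f') (convex_Icc 1 z₀)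
      (hcont.mono Icc_subset_Ici_self) (fun x hx => ?_) (fun x hx => ?_) ⟨hz, hle⟩
      ⟨hz₀, le_rfl⟩ hle <;> rw [interior_Icc] at hx
    · exact (hderiv x hx.1.le).hasDerivWithinAt
    · have := hanti (mem_Ici.mpr hx.1.le) hz₀ hx.2
      exact div_nonneg (mul_nonneg hX.le (by linarith)) (sq_nonneg _)
  · refine antitoneOn_of_hasDerivWithinAt_nonpos (f' := f') (convex_Ici z₀)
      (hcont.mono (Ici_subset_Ici.mpr hz₀)) (fun x hx => ?_) (fun x hx => ?_) self_mem_Ici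
      hle hle <;> rw [interior_Ici, mem_Ioi] at hx
    · exact (hderiv x (hz₀.trans hx.le)).hasDerivWithinAt
    · have := hanti hz₀ (mem_Ici.mpr (hz₀.trans hx.le)) hx
      exact div_nonpos_of_nonpos_of_nonneg (mul_nonpos_of_nonneg_of_nonpos hX.le (by linarith))
        (sq_nonneg _)

theorem penalizedRate_marginalGain_self {z : ℝ} (hz : z ≠ 0) (hzX : z - 1 + X ≠ 0) :
    penalizedRate X (marginalGain X z) z = (z * log z - z + 1) / z := by
  unfold penalizedRate marginalGain; field_simp; ring

theorem penalizedRate_sub_penalizedRate {pb : ℝ} (hpb : pb ≠ 0) (c c' z : ℝ) :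
    penalizedRate X c z - penalizedRate X c' z = (c' - c) * energyOf pb X z / pb := by
  unfold penalizedRate energyOf; field_simp; ring

theorem penalizedRate_one_add_div {pb E : ℝ} (hpb : pb ≠ 0) (hX : X ≠ 0) (hE : E ≠ pb)
    (c : ℝ) : penalizedRate X c (1 + X * E / (pb - E)) =
      (1 - E / pb) * log (1 + X * E / (pb - E)) - c * E / pb := by
  have hpbE : pb - E ≠ 0 := sub_ne_zero.mpr hE.symm
  have hden : 1 + X * E / (pb - E) - 1 + X = X * pb / (pb - E) := by field_simp; ring
  unfold penalizedRate
  rw [hden]; field_simp; ring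

theorem one_add_div_energyOf {pb z : ℝ} (hpb : pb ≠ 0) (hX : X ≠ 0) (hzX : z - 1 + X ≠ 0) :
    1 + X * energyOf pb X z / (pb - energyOf pb X z) = z := by
  have hsub : pb - energyOf pb X z = pb * X / (z - 1 + X) := by
    unfold energyOf; field_simp; ring
  rw [hsub]; unfold energyOf; field_simp; ring

theorem strictMonoOn_energyOf {pb : ℝ} (hpb : 0 < pb) (hX : 0 < X) :
    StrictMonoOn (energyOf pb X) (Ici 1) := by
  intro a ha b hb hab
  rw [mem_Ici] at ha hb
  unfold energyOf
  rw [div_lt_div_iff₀ (by linarith) (by linarith)]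
  nlinarith [mul_pos (mul_pos hpb hX) (sub_pos.mpr hab)]

theorem energyOf_nonneg {pb z : ℝ} (hpb : 0 ≤ pb) (hX : 0 ≤ X) (hz : 1 ≤ z) :
    0 ≤ energyOf pb X z :=
  div_nonneg (mul_nonneg hpb (by linarith)) (by linarith)

theorem energyOf_lt {pb z : ℝ} (hpb : 0 < pb) (hX : 0 < X) (hz : 1 ≤ z) :
    energyOf pb X z < pb := by
  unfold energyOf
  rw [div_lt_iff₀ (by linarith)]
  nlinarith

section Throughput

variable {pb κ z₁ Emax : ℝ} {S : ℝ → ℝ}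

theorem sub_mul_eq_penalizedRate (hpb : 0 < pb) (hX : 0 < X) (hEmax : Emax < pb)
    (hcurve : ∀ E, energyOf pb X z₁ < E → E ≤ Emax →
      S E = κ * ((1 - E / pb) * log (1 + X * E / (pb - E))))
    (c : ℝ) {E : ℝ} (hE₁ : energyOf pb X z₁ < E) (hE : E ≤ Emax) :
    S E - κ * c / pb * E = κ * penalizedRate X c (1 + X * E / (pb - E)) := by
  rw [hcurve E hE₁ hE, penalizedRate_one_add_div hpb.ne' hX.ne' (by linarith)]
  ring

-- `hlin` says that on `[0, energyOf pb X z₁]`, `S / κ` is the tangent to the curved piece at `z₁`.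
theorem sub_mul_le_penalizedRate (hpb : 0 < pb) (hX : 0 < X) (hκ : 0 ≤ κ) (hz₁ : 1 ≤ z₁)
    (hEmax : Emax < pb)
    (hlin : ∀ E, 0 ≤ E → E ≤ energyOf pb X z₁ →
      S E = κ * (penalizedRate X (marginalGain X z₁) z₁ + marginalGain X z₁ * E / pb))
    (hcurve : ∀ E, energyOf pb X z₁ < E → E ≤ Emax →
      S E = κ * ((1 - E / pb) * log (1 + X * E / (pb - E))))
    {c z : ℝ} (hcm : c ≤ marginalGain X z₁) (hz : 1 ≤ z) (hc : marginalGain X z = c)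
    {E : ℝ} (hE₀ : 0 ≤ E) (hE : E ≤ Emax) :
    S E - κ * c / pb * E ≤ κ * penalizedRate X c z := by
  rcases le_or_gt E (energyOf pb X z₁) with hE₁ | hE₁
  · have hgap := penalizedRate_sub_penalizedRate (X := X) hpb.ne' c (marginalGain X z₁) z₁
    have hle := penalizedRate_le hX hz hc hz₁
    have hslack : 0 ≤ (marginalGain X z₁ - c) * (energyOf pb X z₁ - E) / pb :=
      div_nonneg (mul_nonneg (sub_nonneg.2 hcm) (sub_nonneg.2 hE₁)) hpb.le
    have key : penalizedRate X (marginalGain X z₁) z₁ + marginalGain X z₁ * E / pb - c / pb * E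
        ≤ penalizedRate X c z := by
      linear_combination hle + hslack - hgap
    calc S E - κ * c / pb * E
        = κ * (penalizedRate X (marginalGain X z₁) z₁ + marginalGain X z₁ * E / pb
          - c / pb * E) := by rw [hlin E hE₀ hE₁]; ring
      _ ≤ κ * penalizedRate X c z := mul_le_mul_of_nonneg_left key hκ
  · rw [sub_mul_eq_penalizedRate hpb hX hEmax hcurve c hE₁ hE]
    refine mul_le_mul_of_nonneg_left (penalizedRate_le hX hz hc ?_) hκ
    exact le_add_of_nonneg_right (div_nonneg (mul_nonneg hX.le hE₀) (by linarith))

theorem sub_mul_le_apply_zero (hpb : 0 < pb) (hX : 0 < X) (hκ : 0 ≤ κ) (hz₁ : 1 ≤ z₁)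
    (hEmax : Emax < pb)
    (hlin : ∀ E, 0 ≤ E → E ≤ energyOf pb X z₁ →
      S E = κ * (penalizedRate X (marginalGain X z₁) z₁ + marginalGain X z₁ * E / pb))
    (hcurve : ∀ E, energyOf pb X z₁ < E → E ≤ Emax →
      S E = κ * ((1 - E / pb) * log (1 + X * E / (pb - E))))
    {c : ℝ} (hmc : marginalGain X z₁ ≤ c) {E : ℝ} (hE₀ : 0 ≤ E) (hE : E ≤ Emax) :
    S E - κ * c / pb * E ≤ S 0 := by
  have hS0 : S 0 = κ * penalizedRate X (marginalGain X z₁) z₁ := by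
    rw [hlin 0 le_rfl (energyOf_nonneg hpb.le hX.le hz₁)]; ring
  have hslack := mul_nonneg hκ (div_nonneg (mul_nonneg (sub_nonneg.2 hmc) hE₀) hpb.le)
  rcases le_or_gt E (energyOf pb X z₁) with hE₁ | hE₁
  · rw [hlin E hE₀ hE₁, hS0]
    linear_combination hslack
  · have hcurve_m := sub_mul_eq_penalizedRate hpb hX hEmax hcurve (marginalGain X z₁) hE₁ hE
    have hle := mul_le_mul_of_nonneg_left (penalizedRate_le hX hz₁ rfl
      (le_add_of_nonneg_right (div_nonneg (mul_nonneg hX.le hE₀) (by linarith)) :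
        1 ≤ 1 + X * E / (pb - E))) hκ
    linear_combination hle + hslack - hS0 + hcurve_m

theorem isMaxOn_sub_mul_of_marginalGain {z₂ : ℝ} (hpb : 0 < pb) (hX : 0 < X) (hκ : 0 ≤ κ)
    (hz₁ : 1 ≤ z₁) (hz₂ : 1 ≤ z₂) (hmz₂ : marginalGain X z₂ = 0)
    (hlin : ∀ E, 0 ≤ E → E ≤ energyOf pb X z₁ →
      S E = κ * (penalizedRate X (marginalGain X z₁) z₁ + marginalGain X z₁ * E / pb))
    (hcurve : ∀ E, energyOf pb X z₁ < E → E ≤ energyOf pb X z₂ →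
      S E = κ * ((1 - E / pb) * log (1 + X * E / (pb - E))))
    {c z Estar : ℝ} (hc : 0 ≤ c)
    (h1 : c < marginalGain X z₁ → 1 ≤ z ∧ marginalGain X z = c ∧ Estar = energyOf pb X z)
    (h2 : c = marginalGain X z₁ → 0 ≤ Estar ∧ Estar ≤ energyOf pb X z₁)
    (h3 : marginalGain X z₁ < c → Estar = 0) :
    Estar ∈ Icc 0 (energyOf pb X z₂) ∧
      IsMaxOn (fun E => S E - κ * c / pb * E) (Icc 0 (energyOf pb X z₂)) Estar := by
  have hEmax := energyOf_lt hpb hX hz₂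
  have hanti := strictAntiOn_marginalGain hX.le
  have hmono := strictMonoOn_energyOf hpb hX
  rcases lt_trichotomy c (marginalGain X z₁) with hcm | hcm | hcm
  · obtain ⟨hz, hmz, rfl⟩ := h1 hcm
    have hz₁z : z₁ < z := (hanti.lt_iff_gt hz hz₁).mp (hmz ▸ hcm)
    have hzz₂ : z ≤ z₂ := (hanti.le_iff_ge hz₂ hz).mp (by rw [hmz, hmz₂]; exact hc)
    have hEstar₁ := hmono hz₁ hz hz₁z
    have hEstar := (hmono.le_iff_le hz hz₂).mpr hzz₂
    refine ⟨⟨energyOf_nonneg hpb.le hX.le hz, hEstar⟩, isMaxOn_iff.mpr fun E ⟨hE₀, hE⟩ => ?_⟩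
    rw [sub_mul_eq_penalizedRate hpb hX hEmax hcurve c hEstar₁ hEstar,
      one_add_div_energyOf hpb.ne' hX.ne' (by linarith)]
    exact sub_mul_le_penalizedRate hpb hX hκ hz₁ hEmax hlin hcurve hcm.le hz hmz hE₀ hE
  · obtain ⟨hEstar₀, hEstar⟩ := h2 hcm
    have hz₁z₂ : z₁ ≤ z₂ := (hanti.le_iff_ge hz₂ hz₁).mp (by rw [hmz₂, ← hcm]; exact hc)
    refine ⟨⟨hEstar₀, hEstar.trans ((hmono.le_iff_le hz₁ hz₂).mpr hz₁z₂)⟩,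
      isMaxOn_iff.mpr fun E ⟨hE₀, hE⟩ => ?_⟩
    have hS0 : S Estar - κ * c / pb * Estar = S 0 := by
      rw [hlin _ hEstar₀ hEstar, hlin 0 le_rfl (energyOf_nonneg hpb.le hX.le hz₁), hcm]; ring
    rw [hS0]
    exact sub_mul_le_apply_zero hpb hX hκ hz₁ hEmax hlin hcurve hcm.ge hE₀ hE
  · rw [h3 hcm]
    refine ⟨⟨le_rfl, energyOf_nonneg hpb.le hX.le hz₂⟩, isMaxOn_iff.mpr fun E ⟨hE₀, hE⟩ => ?_⟩
    rw [mul_zero, sub_zero]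
    exact sub_mul_le_apply_zero hpb hX hκ hz₁ hEmax hlin hcurve hcm.le hE₀ hE

end Throughput

theorem tangent_eq {L A pb zdag : ℝ} (hX : 0 < X) (hzdag : 1 ≤ zdag)
    (hgdag : zdag * log zdag - zdag + 1 = A) (E : ℝ) :
    L * (A + (X - A) * E / pb) / (zdag * log 2) = L / log 2 *
      (penalizedRate X (marginalGain X zdag) zdag + marginalGain X zdag * E / pb) := by
  rw [penalizedRate_marginalGain_self (by positivity) (by linarith), hgdag,
    marginalGain_eq (by positivity), hgdag]
  ring

theorem isMaxOn_sub_mul_of_waterFilling {pb L A zdag zdd α ν z Estar : ℝ} {S : ℝ → ℝ}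
    (hpb : 0 < pb) (hL : 0 < L) (hX : 0 < X)
    (hzdag : 1 ≤ zdag) (hgdag : zdag * log zdag - zdag + 1 = A)
    (hzdd : 1 ≤ zdd) (hgdd : zdd * log zdd - zdd + 1 = X)
    (hα : α = L * (X - A) / (zdag * pb * log 2))
    (hS1 : ∀ E, 0 ≤ E → E ≤ energyOf pb X zdag →
      S E = L * (A + (X - A) * E / pb) / (zdag * log 2))
    (hS2 : ∀ E, energyOf pb X zdag < E → E ≤ energyOf pb X zdd →
      S E = L * (1 - E / pb) * logb 2 (1 + X * E / (pb - E)))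
    (hν : 0 ≤ ν)
    (h1 : ν < α → 1 < z ∧ z * log z + (ν * pb * log 2 / L - 1) * z + 1 = X ∧
      Estar = energyOf pb X z)
    (h2 : ν = α → 0 ≤ Estar ∧ Estar ≤ energyOf pb X zdag)
    (h3 : α < ν → Estar = 0) :
    Estar ∈ Icc 0 (energyOf pb X zdd) ∧
      IsMaxOn (fun E => S E - ν * E) (Icc 0 (energyOf pb X zdd)) Estar := by
  have hlog2 : 0 < log 2 := log_pos one_lt_two
  have hscale : StrictMono fun a : ℝ => a * pb * log 2 / L := fun a b h => by dsimp only; gcongr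
  have hmα : marginalGain X zdag = α * pb * log 2 / L := by
    rw [marginalGain_eq (by positivity), hgdag, hα]; field_simp
  have hmdd : marginalGain X zdd = 0 := by
    rw [marginalGain_eq (by positivity), hgdd, sub_self, zero_div]
  have hν' : ν = L / log 2 * (ν * pb * log 2 / L) / pb := by field_simp
  rw [hν']
  refine isMaxOn_sub_mul_of_marginalGain (z := z) hpb hX (by positivity) hzdag hzdd hmdd
    (fun E hE₀ hE => (hS1 E hE₀ hE).trans (tangent_eq hX hzdag hgdag E))
    (fun E hE₁ hE => by rw [hS2 E hE₁ hE, logb]; ring) (by positivity)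
    (fun h => ?_) (fun h => h2 (hscale.injective (h.trans hmα))) (fun h => h3 ?_)
  · obtain ⟨hz, hgz, hEstar⟩ := h1 (hscale.lt_iff_lt.mp (hmα ▸ h))
    refine ⟨hz.le, ?_, hEstar⟩
    rw [marginalGain_eq (by positivity), ← hgz]
    field_simp
    ring
  · exact hscale.lt_iff_lt.mp (hmα ▸ h)

end

end WaterFilling

theorem stmt_16_general (N : ℕ)
    (σ2 η pb W : ℝ)
    (hσ2 : 0 < σ2) (hη : 0 < η) (hpb : 0 < pb) (hW : 0 < W)
    (G K p lam : Fin N → ℝ)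
    (hG : ∀ i, 0 < G i) (hK : ∀ i, 0 < K i)
    (hp : ∀ i, 0 < p i) (hlam : ∀ i, 0 < lam i)
    (A X : Fin N → ℝ)
    (hA : ∀ i, A i = (G i) ^ 2 * η * p i / σ2)
    (hX : ∀ i, X i = G i * η * (p i * G i + pb * K i) / σ2)
    (zdag : Fin N → ℝ)
    (hzdag : ∀ i, 1 < zdag i ∧ zdag i * Real.log (zdag i) - zdag i + 1 = A i)
    (Elim : Fin N → ℝ)
    (hElim : ∀ i, Elim i = pb * (zdag i - 1) / (zdag i - 1 + X i))
    (α : Fin N → ℝ)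
    (hα : ∀ i, α i = lam i * W * G i * η * K i / (zdag i * σ2 * Real.log 2))
    (zdd : Fin N → ℝ)
    (hzdd : ∀ i, 1 < zdd i ∧ zdd i * Real.log (zdd i) - zdd i + 1 = X i)
    (Eo : Fin N → ℝ)
    (hEo : ∀ i, Eo i = pb * (zdd i - 1) / (zdd i - 1 + X i))
    (zsect : Fin N → ℝ → ℝ)
    (hzsect : ∀ i, ∀ ν : ℝ, 0 ≤ ν → ν < α i → 1 < zsect i ν ∧
      zsect i ν * Real.log (zsect i ν)
        + (ν * pb * Real.log 2 / (lam i * W) - 1) * zsect i ν + 1 = X i)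
    (γ : Fin N → ℝ → ℝ)
    (hγ : ∀ i, ∀ ν : ℝ, γ i ν = pb * (zsect i ν - 1) * σ2 /
      ((zsect i ν - 1) * σ2 + G i * η * (p i * G i + pb * K i)))
    (S : Fin N → ℝ → ℝ)
    (hS1 : ∀ i, ∀ E : ℝ, 0 ≤ E → E ≤ Elim i →
      S i E = lam i * W * G i * η * (p i * G i + E * K i) / (zdag i * σ2 * Real.log 2))
    (hS2 : ∀ i, ∀ E : ℝ, Elim i < E → E ≤ Eo i →
      S i E = lam i * W * (1 - E / pb) * Real.logb 2 (1 + X i * E / (pb - E)))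
    (Ebtot : ℝ)
    (ν : ℝ) (hν : 0 ≤ ν)
    (Estar : Fin N → ℝ)
    (h1 : ∀ i, ν < α i → Estar i = γ i ν)
    (h2 : ∀ i, ν = α i → 0 ≤ Estar i ∧ Estar i ≤ Elim i)
    (h3 : ∀ i, α i < ν → Estar i = 0)
    (hsum : ∑ i, Estar i = Ebtot) :
    (∀ i, 0 ≤ Estar i ∧ Estar i ≤ Eo i) ∧
    ∀ E : Fin N → ℝ, (∀ i, 0 ≤ E i ∧ E i ≤ Eo i) → (∑ i, E i) ≤ Ebtot →
      (∑ i, S i (E i)) ≤ ∑ i, S i (Estar i) := by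
  have key : ∀ i, Estar i ∈ Icc 0 (Eo i) ∧
      IsMaxOn (fun E => S i E - ν * E) (Icc 0 (Eo i)) (Estar i) := by
    intro i
    have := hG i; have := hK i; have := hp i; have := hlam i
    have hXi : 0 < X i := by rw [hX]; positivity
    have hXA : X i - A i = G i * η * pb * K i / σ2 := by rw [hX, hA]; ring
    have hXσ : G i * η * (p i * G i + pb * K i) = X i * σ2 := by rw [hX]; field_simp
    have hElim' : Elim i = WaterFilling.energyOf pb (X i) (zdag i) := hElim i
    have hEo' : Eo i = WaterFilling.energyOf pb (X i) (zdd i) := hEo i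
    rw [hEo']
    refine WaterFilling.isMaxOn_sub_mul_of_waterFilling (z := zsect i ν) hpb (by positivity) hXi
      (hzdag i).1.le (hzdag i).2 (hzdd i).1.le (hzdd i).2 (by rw [hα, hXA]; field_simp)
      (fun E h₀ h => ?_) (fun E h₁ h => hS2 i E (hElim' ▸ h₁) (hEo' ▸ h)) hν
      (fun h => ?_) (fun h => hElim' ▸ h2 i h) (h3 i)
    · rw [hS1 i E h₀ (hElim' ▸ h), hXA, hA]; field_simp
    · obtain ⟨hz, hgz⟩ := hzsect i ν hν h
      refine ⟨hz, hgz, ?_⟩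
      rw [h1 i h, hγ, hXσ, WaterFilling.energyOf]
      field_simp
  exact ⟨fun i => (key i).1, fun E hE hEsum => Finset.sum_le_sum_of_sub_mul_le _ hν
    (fun i _ => isMaxOn_iff.mp (key i).2 _ (hE i)) hEsum hsum⟩

/-- Water-filling characterization of the social-welfare-maximizing energy
allocation: if ν ≥ 0 and E* satisfy E*_i = γ_i(ν) when ν < α_i, 0 ≤ E*_i ≤ E_i^lim when
ν = α_i, E*_i = 0 when ν > α_i, and Σ E*_i = E_b^tot, then E* globally maximizes
Σ S_i(E_i) over {0 ≤ E_i ≤ E_i^o, Σ E_i ≤ E_b^tot}. -/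
theorem stmt_16 (N : ℕ) (hN : 1 ≤ N)
    (σ2 η pb W : ℝ)
    (hσ2 : 0 < σ2) (hη : 0 < η) (hpb : 0 < pb) (hW : 0 < W)
    (G K p lam : Fin N → ℝ)
    (hG : ∀ i, 0 < G i) (hK : ∀ i, 0 < K i)
    (hp : ∀ i, 0 < p i) (hlam : ∀ i, 0 < lam i)
    (A X : Fin N → ℝ)
    (hA : ∀ i, A i = (G i) ^ 2 * η * p i / σ2)
    (hX : ∀ i, X i = G i * η * (p i * G i + pb * K i) / σ2)
    (zdag : Fin N → ℝ)
    (hzdag : ∀ i, 1 < zdag i ∧ zdag i * Real.log (zdag i) - zdag i + 1 = A i)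
    (Elim : Fin N → ℝ)
    (hElim : ∀ i, Elim i = pb * (zdag i - 1) / (zdag i - 1 + X i))
    (α : Fin N → ℝ)
    (hα : ∀ i, α i = lam i * W * G i * η * K i / (zdag i * σ2 * Real.log 2))
    (zdd : Fin N → ℝ)
    (hzdd : ∀ i, 1 < zdd i ∧ zdd i * Real.log (zdd i) - zdd i + 1 = X i)
    (Eo : Fin N → ℝ)
    (hEo : ∀ i, Eo i = pb * (zdd i - 1) / (zdd i - 1 + X i))
    (zsect : Fin N → ℝ → ℝ)
    (hzsect : ∀ i, ∀ ν : ℝ, 0 ≤ ν → ν < α i → 1 < zsect i ν ∧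
      zsect i ν * Real.log (zsect i ν)
        + (ν * pb * Real.log 2 / (lam i * W) - 1) * zsect i ν + 1 = X i)
    (γ : Fin N → ℝ → ℝ)
    (hγ : ∀ i, ∀ ν : ℝ, γ i ν = pb * (zsect i ν - 1) * σ2 /
      ((zsect i ν - 1) * σ2 + G i * η * (p i * G i + pb * K i)))
    (S : Fin N → ℝ → ℝ)
    (hS1 : ∀ i, ∀ E : ℝ, 0 ≤ E → E ≤ Elim i →
      S i E = lam i * W * G i * η * (p i * G i + E * K i) / (zdag i * σ2 * Real.log 2))
    (hS2 : ∀ i, ∀ E : ℝ, Elim i < E → E ≤ Eo i →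
      S i E = lam i * W * (1 - E / pb) * Real.logb 2 (1 + X i * E / (pb - E)))
    (Ebtot : ℝ) (hEb0 : 0 < Ebtot) (hEb : Ebtot < ∑ i, Eo i)
    (ν : ℝ) (hν : 0 ≤ ν)
    (Estar : Fin N → ℝ)
    (h1 : ∀ i, ν < α i → Estar i = γ i ν)
    (h2 : ∀ i, ν = α i → 0 ≤ Estar i ∧ Estar i ≤ Elim i)
    (h3 : ∀ i, α i < ν → Estar i = 0)
    (hsum : ∑ i, Estar i = Ebtot) :
    (∀ i, 0 ≤ Estar i ∧ Estar i ≤ Eo i) ∧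
    ∀ E : Fin N → ℝ, (∀ i, 0 ≤ E i ∧ E i ≤ Eo i) → (∑ i, E i) ≤ Ebtot →
      (∑ i, S i (E i)) ≤ ∑ i, S i (Estar i) :=
  stmt_16_general N σ2 η pb W hσ2 hη hpb hW G K p lam hG hK hp hlam A X hA hX zdag hzdag Elim hElim
    α hα zdd hzdd Eo hEo zsect hzsect γ hγ S hS1 hS2 Ebtot ν hν Estar h1 h2 h3 hsum
end

section
/- For real constants A > 0 and C > 0, the function h(τ, E) = (1 − τ)·ln(1 + (Aτ + C·E)/(1 − τ)) is concave on the convex set {(τ, E) ∈ ℝ² : 0 < τ < 1, E ≥ 0}. -/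
/-- For A > 0 and C > 0, h(τ, E) = (1 − τ)·ln(1 + (Aτ + CE)/(1 − τ)) is
concave on the convex set {(τ, E) : 0 < τ < 1, E ≥ 0}. -/
theorem stmt_18 (A C : ℝ) (hA : 0 < A) (hC : 0 < C) :
    ConcaveOn ℝ {x : ℝ × ℝ | 0 < x.1 ∧ x.1 < 1 ∧ 0 ≤ x.2}
      (fun x : ℝ × ℝ => (1 - x.1) * Real.log (1 + (A * x.1 + C * x.2) / (1 - x.1))) := by
  constructor
  · have hset : {x : ℝ × ℝ | 0 < x.1 ∧ x.1 < 1 ∧ 0 ≤ x.2}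
        = Set.Ioo (0:ℝ) 1 ×ˢ Set.Ici (0:ℝ) := by
      ext x; simp [Set.mem_Ioo, and_assoc]
    rw [hset]
    exact (convex_Ioo 0 1).prod (convex_Ici 0)
  · rintro ⟨τ1, E1⟩ ⟨hτ1, hτ1', hE1⟩ ⟨τ2, E2⟩ ⟨hτ2, hτ2', hE2⟩ a b ha hb hab
    rcases eq_or_lt_of_le ha with rfl | ha
    · have hb1 : b = 1 := by linarith
      subst hb1; simp
    rcases eq_or_lt_of_le hb with rfl | hb
    · have ha1 : a = 1 := by linarith
      subst ha1; simp
    simp only [Prod.smul_mk, Prod.mk_add_mk, smul_eq_mul]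
    set u1 : ℝ := 1 - τ1 with hu1
    set u2 : ℝ := 1 - τ2 with hu2
    have hu1p : 0 < u1 := by simp [hu1]; linarith
    have hu2p : 0 < u2 := by simp [hu2]; linarith
    set s1 : ℝ := A * τ1 + C * E1 with hs1
    set s2 : ℝ := A * τ2 + C * E2 with hs2
    have hs1n : 0 ≤ s1 := by positivity
    have hs2n : 0 ≤ s2 := by positivity
    set u : ℝ := a * u1 + b * u2 with hu
    have hup : 0 < u := by positivity
    have hune : u ≠ 0 := ne_of_gt hup
    -- the combined point
    have hucomb : 1 - (a * τ1 + b * τ2) = u := by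
      simp only [hu, hu1, hu2]; nlinarith [hab]
    have hscomb : A * (a * τ1 + b * τ2) + C * (a * E1 + b * E2) = a * s1 + b * s2 := by
      simp only [hs1, hs2]; ring
    -- concavity of log
    have hx1 : (0:ℝ) < 1 + s1 / u1 := by positivity
    have hx2 : (0:ℝ) < 1 + s2 / u2 := by positivity
    set α : ℝ := a * u1 / u with hα
    set β : ℝ := b * u2 / u with hβ
    have hαn : 0 ≤ α := by positivity
    have hβn : 0 ≤ β := by positivity
    have hαβ : α + β = 1 := by
      rw [hα, hβ, ← add_div, ← hu, div_self hune]
    have hlog := strictConcaveOn_log_Ioi.concaveOn.2 (Set.mem_Ioi.2 hx1)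
      (Set.mem_Ioi.2 hx2) hαn hβn hαβ
    simp only [smul_eq_mul] at hlog
    have hcombo : α * (1 + s1 / u1) + β * (1 + s2 / u2) = 1 + (a * s1 + b * s2) / u := by
      rw [hα, hβ]; field_simp; rw [hu]; ring
    rw [hcombo] at hlog
    rw [hucomb, hscomb]
    have := mul_le_mul_of_nonneg_left hlog (le_of_lt hup)
    calc a * (u1 * Real.log (1 + s1 / u1)) + b * (u2 * Real.log (1 + s2 / u2))
        = u * (α * Real.log (1 + s1 / u1) + β * Real.log (1 + s2 / u2)) := by
          rw [hα, hβ]; field_simp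
      _ ≤ u * Real.log (1 + (a * s1 + b * s2) / u) := this
end
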